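/- arXiv:math/0411653 — 10 statements merged into one kernel-verified Lean document; each statement's English description precedes it below -/
import Mathlib

section
/- For every n ≥ 1 and every mediated digraph D on n vertices, the maximum in-degree of D is at least ⌈(√(4n−3) − 1)/2⌉. Consequently μ(n) ≥ f(n). -/
set_option linter.deprecated false

/-!
Every pair of distinct vertices lies in a common closed in-neighbourhood, and each of the `n`
closed in-neighbourhoods has at most `Δ + 1` elements, where `Δ = Δ⁻(D)`. Counting ordered pairs
gives `n (n - 1) ≤ n Δ (Δ + 1)`, i.e. `4n - 3 ≤ (2Δ + 1)²`, which is `Δ ≥ f(n)`.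
The bound on `μ(n)` follows because the complete digraph is mediated, so the infimum is attained.
-/

/-- The in-degree of vertex `z` in the digraph on `Fin n` with arc relation `A`
(`A x z` means `x` dominates `z`). -/
noncomputable def inDeg {n : ℕ} (A : Fin n → Fin n → Prop) (z : Fin n) : ℕ :=
  Nat.card {x : Fin n // A x z}

/-- The maximum in-degree `Δ⁻(D)` of the digraph on `Fin n` with arc relation `A`. -/
noncomputable def maxInDeg {n : ℕ} (A : Fin n → Fin n → Prop) : ℕ :=
  Finset.univ.sup (inDeg A)

/-- A digraph is mediated if for every pair of distinct vertices `x, y` there is a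
vertex `z` with `x, y ∈ N⁻[z]` (possibly `z = x` or `z = y`). -/
def Mediated {n : ℕ} (A : Fin n → Fin n → Prop) : Prop :=
  ∀ x y : Fin n, x ≠ y → ∃ z : Fin n, (x = z ∨ A x z) ∧ (y = z ∨ A y z)

/-- The `n`th mediation number `μ(n)`: the minimum of `Δ⁻(D)` over all mediated
digraphs (irreflexive arc relations) on `n` vertices. -/
noncomputable def mu (n : ℕ) : ℕ :=
  sInf { d : ℕ | ∃ A : Fin n → Fin n → Prop, Irreflexive A ∧ Mediated A ∧ maxInDeg A = d }

/-- `f(n) = ⌈(√(4n−3) − 1)/2⌉`. -/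
noncomputable def f (n : ℕ) : ℕ := ⌈(Real.sqrt (4 * (n : ℝ) - 3) - 1) / 2⌉₊

/-- The closed in-neighbourhood `N⁻[z]`. -/
noncomputable def closedInNbhd {n : ℕ} (A : Fin n → Fin n → Prop) (z : Fin n) : Finset (Fin n) :=
  open Classical in insert z ({x | A x z} : Finset (Fin n))

section Mediated

variable {n : ℕ} {A : Fin n → Fin n → Prop}

theorem mem_closedInNbhd {x z : Fin n} : x ∈ closedInNbhd A z ↔ x = z ∨ A x z := by
  classical
  simp [closedInNbhd]

theorem card_closedInNbhd_le (hA : Irreflexive A) (z : Fin n) :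
    (closedInNbhd A z).card ≤ maxInDeg A + 1 := by
  classical
  have hz : z ∉ ({x | A x z} : Finset (Fin n)) := by simp [hA z]
  have hcard : ({x | A x z} : Finset (Fin n)).card = inDeg A z := by
    rw [inDeg, Nat.card_eq_fintype_card, Fintype.card_subtype]
  calc (closedInNbhd A z).card = inDeg A z + 1 := by
        rw [closedInNbhd, Finset.card_insert_of_notMem hz, ← hcard]
    _ ≤ maxInDeg A + 1 := by gcongr; exact Finset.le_sup (Finset.mem_univ z)

theorem card_offDiag_closedInNbhd_le (hA : Irreflexive A) (z : Fin n) :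
    (closedInNbhd A z).offDiag.card ≤ maxInDeg A * (maxInDeg A + 1) := by
  have hz := card_closedInNbhd_le hA z
  rw [Finset.offDiag_card, ← Nat.mul_sub_one, mul_comm]
  gcongr
  omega

theorem Mediated.offDiag_subset_biUnion (hA : Mediated A) :
    (Finset.univ : Finset (Fin n)).offDiag ⊆
      Finset.univ.biUnion fun z => (closedInNbhd A z).offDiag := by
  rintro ⟨x, y⟩ hxy
  obtain ⟨z, hxz, hyz⟩ := hA x y (Finset.mem_offDiag.1 hxy).2.2
  exact Finset.mem_biUnion.2 ⟨z, Finset.mem_univ z,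
    Finset.mem_offDiag.2 ⟨mem_closedInNbhd.2 hxz, mem_closedInNbhd.2 hyz,
      (Finset.mem_offDiag.1 hxy).2.2⟩⟩

theorem Mediated.sub_one_le_maxInDeg_mul (hI : Irreflexive A) (hA : Mediated A) :
    n - 1 ≤ maxInDeg A * (maxInDeg A + 1) := by
  classical
  set d := maxInDeg A
  have hpairs : n * (n - 1) ≤ n * (d * (d + 1)) :=
    calc n * (n - 1) = (Finset.univ : Finset (Fin n)).offDiag.card := by
          rw [Finset.offDiag_card, Finset.card_univ, Fintype.card_fin, Nat.mul_sub_one]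
      _ ≤ (Finset.univ.biUnion fun z => (closedInNbhd A z).offDiag).card :=
          Finset.card_le_card hA.offDiag_subset_biUnion
      _ ≤ ∑ z, (closedInNbhd A z).offDiag.card := Finset.card_biUnion_le
      _ ≤ ∑ _z : Fin n, d * (d + 1) := by gcongr with z; exact card_offDiag_closedInNbhd_le hI z
      _ = n * (d * (d + 1)) := by simp
  rcases Nat.eq_zero_or_pos n with rfl | hn
  · exact Nat.zero_le _
  · exact Nat.le_of_mul_le_mul_left hpairs hn

end Mediated

theorem f_le_of_sub_one_le_mul {n d : ℕ} (h : n - 1 ≤ d * (d + 1)) : f n ≤ d := by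
  have hn : (n : ℝ) ≤ d * (d + 1) + 1 := by exact_mod_cast (by omega : n ≤ d * (d + 1) + 1)
  have hsqrt : Real.sqrt (4 * (n : ℝ) - 3) ≤ 2 * d + 1 :=
    (Real.sqrt_le_left (by positivity)).2 (by nlinarith)
  rw [f, Nat.ceil_le]
  linarith

theorem exists_maxInDeg_eq_mu (n : ℕ) :
    ∃ A : Fin n → Fin n → Prop, Irreflexive A ∧ Mediated A ∧ maxInDeg A = mu n := by
  have hcomplete : Irreflexive (fun x y : Fin n => x ≠ y) ∧ Mediated (fun x y : Fin n => x ≠ y) :=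
    ⟨fun x hx => hx rfl, fun x y hxy => ⟨x, Or.inl rfl, Or.inr hxy.symm⟩⟩
  exact Nat.sInf_mem (s := {d | ∃ A : Fin n → Fin n → Prop, Irreflexive A ∧ Mediated A ∧
    maxInDeg A = d}) ⟨_, _, hcomplete.1, hcomplete.2, rfl⟩

theorem mediation_lower_bound_general (n : ℕ) :
    (∀ A : Fin n → Fin n → Prop, Irreflexive A → Mediated A → f n ≤ maxInDeg A) ∧
    f n ≤ mu n := by
  have hbound : ∀ A : Fin n → Fin n → Prop, Irreflexive A → Mediated A → f n ≤ maxInDeg A :=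
    fun A hI hA => f_le_of_sub_one_le_mul (hA.sub_one_le_maxInDeg_mul hI)
  obtain ⟨A, hI, hA, hmu⟩ := exists_maxInDeg_eq_mu n
  exact ⟨hbound, hmu ▸ hbound A hI hA⟩

/-- For every `n ≥ 1` and every mediated digraph `D` on `n` vertices, the maximum
in-degree of `D` is at least `f(n) = ⌈(√(4n−3) − 1)/2⌉`; consequently `μ(n) ≥ f(n)`. -/
theorem mediation_lower_bound (n : ℕ) (hn : 1 ≤ n) :
    (∀ A : Fin n → Fin n → Prop, Irreflexive A → Mediated A → f n ≤ maxInDeg A) ∧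
    f n ≤ mu n :=
  mediation_lower_bound_general n
end

section
/- Let D be a mediated digraph on n vertices v₁,…,vₙ with in-degrees d₁,…,dₙ. Then ∑_{i=1}^{n} ( C(dᵢ,2) + dᵢ ) ≥ C(n,2), where C(a,2) = a(a−1)/2. -/
/-- If `D` is a mediated digraph on `n` vertices with in-degrees `d₁,…,dₙ`, then
`∑ᵢ (C(dᵢ,2) + dᵢ) ≥ C(n,2)`. -/
theorem mediated_degree_sum (n : ℕ) (A : Fin n → Fin n → Prop)
    (hirr : Irreflexive A) (hmed : Mediated A) :
    n.choose 2 ≤ ∑ i : Fin n, ((inDeg A i).choose 2 + inDeg A i) := by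
  classical
  -- closed in-neighborhood as a Finset
  set S : Fin n → Finset (Fin n) := fun z => Finset.univ.filter (fun x => x = z ∨ A x z)
    with hS
  have hmemS : ∀ x z, x ∈ S z ↔ (x = z ∨ A x z) := by
    intro x z; simp [hS]
  have hcardS : ∀ z, (S z).card = inDeg A z + 1 := by
    intro z
    have h1 : S z = insert z (Finset.univ.filter (fun x => A x z)) := by
      ext x
      simp [hS, Finset.mem_insert, or_comm]
    rw [h1, Finset.card_insert_of_notMem (by simp [hirr z])]
    have h2 : inDeg A z = (Finset.univ.filter (fun x => A x z)).card := by
      rw [inDeg, Nat.card_eq_fintype_card, Fintype.card_subtype]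
    omega
  -- choice of mediator
  have hg : ∀ p : Fin n × Fin n, p.1 ≠ p.2 → ∃ z, p.1 ∈ S z ∧ p.2 ∈ S z := by
    intro p hne
    obtain ⟨z, hz1, hz2⟩ := hmed p.1 p.2 hne
    exact ⟨z, (hmemS _ _).mpr hz1, (hmemS _ _).mpr hz2⟩
  set g : Fin n × Fin n → Fin n := fun p =>
    if h : p.1 ≠ p.2 then Classical.choose (hg p h) else p.1 with hgdef
  -- key counting inequality on ordered pairs
  have key : n * n - n ≤ ∑ z : Fin n, ((S z).card * (S z).card - (S z).card) := by
    have hinj := Finset.card_le_card_of_injOn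
      (f := fun p : Fin n × Fin n => (⟨g p, p⟩ : (z : Fin n) × (Fin n × Fin n)))
      (s := (Finset.univ : Finset (Fin n)).offDiag)
      (t := Finset.univ.sigma (fun z => (S z).offDiag))
      ?_ ?_
    · have hcard : ∀ z : Fin n, (S z).offDiag.card = (S z).card * (S z).card - (S z).card := by
        intro z; rw [Finset.offDiag_card]
      simpa [Finset.card_sigma, Finset.offDiag_card, Finset.card_univ, hcard] using hinj
    · intro p hp
      have hne : p.1 ≠ p.2 := (Finset.mem_offDiag.mp hp).2.2
      have hz := Classical.choose_spec (hg p hne)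
      simp only [Finset.mem_coe, Finset.mem_sigma, Finset.mem_univ, true_and, Finset.mem_offDiag]
      rw [hgdef]
      simp only [dif_pos hne]
      exact ⟨hz.1, hz.2, hne⟩
    · intro p _ q _ h
      exact congrArg Sigma.snd h
  -- `2 * C(k,2) + k = k * k`
  have htwo : ∀ k : ℕ, 2 * (k.choose 2) + k = k * k := by
    intro k
    induction k with
    | zero => simp
    | succ m ih =>
      rw [Nat.choose_succ_succ, Nat.choose_one_right]
      nlinarith [ih]
  -- rewrite both sides
  have hL : n * n - n = 2 * (n.choose 2) := by
    rw [← htwo n, Nat.add_sub_cancel]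
  have hR : ∀ z : Fin n, (S z).card * (S z).card - (S z).card
      = 2 * ((inDeg A z).choose 2 + inDeg A z) := by
    intro z
    rw [← htwo ((S z).card), Nat.add_sub_cancel, hcardS z,
      Nat.choose_succ_succ, Nat.choose_one_right, Nat.add_comm]
  rw [hL] at key
  have : ∑ z : Fin n, ((S z).card * (S z).card - (S z).card)
      = 2 * ∑ i : Fin n, ((inDeg A i).choose 2 + inDeg A i) := by
    rw [Finset.mul_sum]
    exact Finset.sum_congr rfl fun z _ => hR z
  rw [this] at key
  exact Nat.le_of_mul_le_mul_left key (by norm_num)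
end

section
/- Every symmetric (n,k,λ)-design is a mediated family of blocks; in particular, the family of blocks of a symmetric (n,k,λ)-design has a system of distinct representatives. -/
/-- A family of `n` blocks on the point set `Fin n` is 2-covering if every pair of
distinct points is contained in some block. -/
def TwoCovering {n : ℕ} (F : Fin n → Finset (Fin n)) : Prop :=
  ∀ x y : Fin n, x ≠ y → ∃ i : Fin n, x ∈ F i ∧ y ∈ F i

/-- A family has a system of distinct representatives if one can pick pairwise
distinct points, one from each block. -/
def HasSDR {n : ℕ} (F : Fin n → Finset (Fin n)) : Prop :=
  ∃ r : Fin n → Fin n, Function.Injective r ∧ ∀ i : Fin n, r i ∈ F i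

/-- A family of `n` blocks on `Fin n` (hence symmetric) is mediated if it is
2-covering and has an SDR. -/
def MediatedFamily {n : ℕ} (F : Fin n → Finset (Fin n)) : Prop :=
  TwoCovering F ∧ HasSDR F

/-- The maximum cardinality of a block of the family. -/
def mcard {n : ℕ} (F : Fin n → Finset (Fin n)) : ℕ :=
  Finset.univ.sup fun i => (F i).card

/-- `μ⁻(n)`: the minimum of `mcard F` over all mediated families on `[n]`. -/
noncomputable def muMinus (n : ℕ) : ℕ :=
  sInf { m : ℕ | ∃ F : Fin n → Finset (Fin n), MediatedFamily F ∧ mcard F = m }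

open Finset

/-!
Counting the pairs `(i, y)` with `x, y ∈ Bᵢ`, `y ≠ x`, shows that the number `r` of blocks through
a point satisfies `r (k - 1) = (n - 1) λ`, so `r` does not depend on the point; counting incidences
gives `n r = n k`, hence `r = k`. The incidence graph of the design is therefore `k`-regular, and
double counting the incidences between a set `S` of blocks and their union gives `|S| k ≤ |⋃ S| k`,
which is Hall's condition.
-/

section Replication

variable {ι α : Type*} [Fintype ι] [DecidableEq α]

def replication (B : ι → Finset α) (x : α) : ℕ := #{i | x ∈ B i}

theorem sum_replication [Fintype α] (B : ι → Finset α) : ∑ x, replication B x = ∑ i, #(B i) := by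
  simp only [replication, card_filter]
  rw [sum_comm]
  simp

theorem replication_mul_pred_eq [Fintype α] {k lam : ℕ} {B : ι → Finset α}
    (hblock : ∀ i, #(B i) = k)
    (hpair : ∀ x y, x ≠ y → #{i | x ∈ B i ∧ y ∈ B i} = lam) (x : α) :
    replication B x * (k - 1) = (Fintype.card α - 1) * lam := by
  have hcount := card_mul_eq_card_mul (s := {i | x ∈ B i}) (t := univ.erase x)
    (fun i y => y ∈ B i) (m := k - 1) (n := lam) (fun i hi => ?_) (fun y hy => ?_)
  · simpa [replication, card_erase_of_mem] using hcount
  · have hx : x ∈ B i := (mem_filter.1 hi).2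
    rw [← hblock i, ← card_erase_of_mem hx]
    congr 1
    ext y
    simp [bipartiteAbove, and_comm]
  · rw [← hpair x y (ne_of_mem_erase hy).symm, bipartiteBelow, filter_filter]

theorem replication_eq_of_card_eq [Fintype α] {k lam : ℕ} {B : ι → Finset α}
    (hcard : Fintype.card ι = Fintype.card α) (hk : 2 ≤ k)
    (hblock : ∀ i, #(B i) = k)
    (hpair : ∀ x y, x ≠ y → #{i | x ∈ B i ∧ y ∈ B i} = lam) (x : α) :
    replication B x = k := by
  have hconst : ∀ y, replication B y = replication B x := fun y =>
    Nat.eq_of_mul_eq_mul_right (by omega : 0 < k - 1)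
      ((replication_mul_pred_eq hblock hpair y).trans (replication_mul_pred_eq hblock hpair x).symm)
  have hsum : Fintype.card α * replication B x = Fintype.card α * k := by
    calc Fintype.card α * replication B x = ∑ y, replication B y := by simp [hconst]
      _ = ∑ i, #(B i) := sum_replication B
      _ = Fintype.card α * k := by simp [hblock, hcard]
  exact Nat.eq_of_mul_eq_mul_left (Fintype.card_pos_iff.2 ⟨x⟩) hsum

theorem exists_injective_mem_of_replication_le {k : ℕ} (hk : 0 < k) {B : ι → Finset α}
    (hblock : ∀ i, k ≤ #(B i)) (hrep : ∀ x, replication B x ≤ k) :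
    ∃ f : ι → α, Function.Injective f ∧ ∀ i, f i ∈ B i := by
  refine (all_card_le_biUnion_card_iff_exists_injective B).1 fun s => ?_
  refine Nat.le_of_mul_le_mul_right
    (card_mul_le_card_mul (fun i y => y ∈ B i) (fun i hi => ?_) (fun y _ => ?_)) hk
  · have hsub : B i ⊆ s.biUnion B := subset_biUnion_of_mem B hi
    rw [bipartiteAbove, filter_mem_eq_inter, inter_eq_right.2 hsub]
    exact hblock i
  · exact (card_le_card (filter_subset_filter _ (subset_univ s))).trans (hrep y)

end Replication

theorem symmetric_design_mediated_general (n k lam : ℕ) (hk : 2 ≤ k)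
    (hlam : 1 ≤ lam) (B : Fin n → Finset (Fin n))
    (hblock : ∀ i : Fin n, (B i).card = k)
    (hpair : ∀ x y : Fin n, x ≠ y →
      (Finset.univ.filter fun i => x ∈ B i ∧ y ∈ B i).card = lam) :
    MediatedFamily B ∧ HasSDR B := by
  have hSDR : HasSDR B :=
    exists_injective_mem_of_replication_le (by omega) (fun i => (hblock i).ge) fun x =>
      (replication_eq_of_card_eq rfl hk hblock hpair x).le
  have hcover : TwoCovering B := fun x y hxy => by
    obtain ⟨i, hi⟩ := card_pos.1 (hlam.trans_eq (hpair x y hxy).symm)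
    exact ⟨i, (mem_filter.1 hi).2⟩
  exact ⟨⟨hcover, hSDR⟩, hSDR⟩

/-- Every symmetric `(n,k,λ)`-design is a mediated family of blocks; in particular
it has a system of distinct representatives. (A symmetric design has `n` blocks
`B₁,…,Bₙ` on `n` points, each block of size `k`, with `n > k ≥ 2`, `λ ≥ 1`, and
every pair of distinct points lying in exactly `λ` blocks.) -/
theorem symmetric_design_mediated (n k lam : ℕ) (hk : 2 ≤ k) (hkn : k < n)
    (hlam : 1 ≤ lam) (B : Fin n → Finset (Fin n))
    (hblock : ∀ i : Fin n, (B i).card = k)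
    (hpair : ∀ x y : Fin n, x ≠ y →
      (Finset.univ.filter fun i => x ∈ B i ∧ y ∈ B i).card = lam) :
    MediatedFamily B ∧ HasSDR B :=
  symmetric_design_mediated_general n k lam hk hlam B hblock hpair
end

section
/- For each prime power q, μ(q² + q + 1) = f(q² + q + 1) = q. -/
lemma f_val (q : ℕ) : f (q ^ 2 + q + 1) = q := by
  unfold f
  rw [show (4 * (((q ^ 2 + q + 1 : ℕ)) : ℝ) - 3) = ((2 * q + 1 : ℕ) : ℝ) ^ 2 by push_cast; ring,
    Real.sqrt_sq (by positivity),
    show (((2 * q + 1 : ℕ) : ℝ) - 1) / 2 = (q : ℝ) by push_cast; ring,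
    Nat.ceil_natCast]


lemma lower_bound (q : ℕ) (hq : 1 ≤ q) (A : Fin (q ^ 2 + q + 1) → Fin (q ^ 2 + q + 1) → Prop)
    (hmed : Mediated A) : q ≤ maxInDeg A := by
  classical
  set d := maxInDeg A with hd
  have hz : ∀ p : Fin (q ^ 2 + q + 1) × Fin (q ^ 2 + q + 1), p.1 ≠ p.2 →
      ∃ z, (p.1 = z ∨ A p.1 z) ∧ (p.2 = z ∨ A p.2 z) := fun p h => hmed p.1 p.2 h
  set g : Fin (q ^ 2 + q + 1) × Fin (q ^ 2 + q + 1) → Fin (q ^ 2 + q + 1) :=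
    fun p => if h : p.1 ≠ p.2 then (hz p h).choose else p.1 with hg
  set S : Finset (Fin (q ^ 2 + q + 1) × Fin (q ^ 2 + q + 1)) :=
    Finset.univ.filter fun p => p.1 ≠ p.2 with hS
  set N : Fin (q ^ 2 + q + 1) → Finset (Fin (q ^ 2 + q + 1)) :=
    fun z => insert z (Finset.univ.filter fun x => A x z) with hN
  have hNcard : ∀ z, (N z).card ≤ d + 1 := by
    intro z
    refine (Finset.card_insert_le _ _).trans ?_
    have h1 : (Finset.univ.filter fun x => A x z).card = inDeg A z := by
      rw [inDeg, Nat.card_eq_fintype_card, Fintype.card_subtype]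
    have h2 : inDeg A z ≤ d := Finset.le_sup (Finset.mem_univ z)
    omega
  have hfiber : ∀ z, (S.filter fun p => g p = z).card ≤ (d + 1) * d := by
    intro z
    have hsub : (S.filter fun p => g p = z) ⊆ (N z).offDiag := by
      intro p hp
      rw [Finset.mem_filter] at hp
      obtain ⟨hpS, hpz⟩ := hp
      have hne : p.1 ≠ p.2 := (Finset.mem_filter.mp hpS).2
      have hspec := (hz p hne).choose_spec
      have hgp : g p = (hz p hne).choose := by simp [hg, hne]
      rw [hgp] at hpz
      rw [hpz] at hspec
      rw [Finset.mem_offDiag]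
      refine ⟨?_, ?_, hne⟩
      · rcases hspec.1 with h | h
        · simp [hN, h]
        · simp [hN, h]
      · rcases hspec.2 with h | h
        · simp [hN, h]
        · simp [hN, h]
    refine (Finset.card_le_card hsub).trans ?_
    rw [Finset.offDiag_card]
    have h1 := hNcard z
    calc (N z).card * (N z).card - (N z).card = (N z).card * ((N z).card - 1) := by
          rw [Nat.mul_sub, mul_one]
      _ ≤ (d + 1) * d := Nat.mul_le_mul h1 (by omega)
  have hScard : S.card + (q ^ 2 + q + 1) = (q ^ 2 + q + 1) * (q ^ 2 + q + 1) := by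
    have h1 : (Finset.univ.filter fun p : Fin (q ^ 2 + q + 1) × Fin (q ^ 2 + q + 1) =>
        ¬ p.1 ≠ p.2).card = q ^ 2 + q + 1 := by
      have heq : (Finset.univ.filter fun p : Fin (q ^ 2 + q + 1) × Fin (q ^ 2 + q + 1) =>
          ¬ p.1 ≠ p.2) = Finset.univ.image (fun x : Fin (q ^ 2 + q + 1) => (x, x)) := by
        ext p
        simp only [Finset.mem_filter, Finset.mem_univ, true_and, Finset.mem_image, not_not]
        constructor
        · intro h; exact ⟨p.1, by rw [Prod.ext_iff]; exact ⟨rfl, h⟩⟩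
        · rintro ⟨x, rfl⟩; rfl
      rw [heq, Finset.card_image_of_injective _ fun a b h => (Prod.ext_iff.mp h).1,
        Finset.card_univ, Fintype.card_fin]
    have h2 := Finset.card_filter_add_card_filter_not
      (s := (Finset.univ : Finset (Fin (q ^ 2 + q + 1) × Fin (q ^ 2 + q + 1))))
      (p := fun p => p.1 ≠ p.2)
    rw [Finset.card_univ, Fintype.card_prod, Fintype.card_fin] at h2
    rw [hS]
    omega
  have hcount : S.card ≤ (q ^ 2 + q + 1) * ((d + 1) * d) := by
    rw [Finset.card_eq_sum_card_fiberwise (f := g) (t := Finset.univ) fun x _ => Finset.mem_univ _]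
    calc ∑ z : Fin (q ^ 2 + q + 1), (S.filter fun p => g p = z).card
        ≤ ∑ _z : Fin (q ^ 2 + q + 1), (d + 1) * d := Finset.sum_le_sum fun z _ => hfiber z
      _ = (q ^ 2 + q + 1) * ((d + 1) * d) := by
          rw [Finset.sum_const, Finset.card_univ, Fintype.card_fin, smul_eq_mul]
  have hM : q ^ 2 + q + 1 = q * (q + 1) + 1 := by ring
  have h1 : (q ^ 2 + q + 1) * (q * (q + 1) + 1) ≤ (q ^ 2 + q + 1) * ((d + 1) * d + 1) := by
    rw [← hM]
    conv_rhs => rw [Nat.mul_add, mul_one]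
    omega
  have key : q * (q + 1) + 1 ≤ (d + 1) * d + 1 := Nat.le_of_mul_le_mul_left h1 (by positivity)
  by_contra hlt
  push_neg at hlt
  have h3 : (d + 1) * d ≤ q * d := Nat.mul_le_mul_right d (by omega)
  have h4 : q * d < q * (q + 1) := mul_lt_mul_of_pos_left (by omega) (by omega)
  omega

open Configuration
open scoped LinearAlgebra.Projectivization

section ProjPlane

variable (K : Type) [Field K] [Fintype K] [DecidableEq K]

lemma card_projectivization :
    Nat.card (ℙ K (Fin 3 → K)) = Fintype.card K ^ 2 + Fintype.card K + 1 := by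
  classical
  haveI : Finite (ℙ K (Fin 3 → K)) := Quotient.finite _
  letI : Fintype (ℙ K (Fin 3 → K)) := Fintype.ofFinite _
  set q := Fintype.card K with hqdef
  have hq2 : 2 ≤ q := Fintype.one_lt_card
  set T := {v : Fin 3 → K // v ≠ 0} with hT
  have hTcard : Fintype.card T = q ^ 3 - 1 := by
    rw [Fintype.card_subtype_compl (fun v : Fin 3 → K => v = 0)]
    rw [Fintype.card_fun, Fintype.card_fin, Fintype.card_subtype_eq (0 : Fin 3 → K)]
  set g : T → ℙ K (Fin 3 → K) := fun v => Projectivization.mk K v.1 v.2 with hg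
  have hfib : ∀ x : ℙ K (Fin 3 → K), Nat.card {v : T // g v = x} = q - 1 := by
    intro x
    induction x using Projectivization.ind with
    | h w hw =>
      have hbij : Function.Bijective (fun u : Kˣ =>
          (⟨⟨(u : K) • w, smul_ne_zero u.ne_zero hw⟩,
            (Projectivization.mk_eq_mk_iff K _ _ _ hw).mpr ⟨u, by rw [Units.smul_def]⟩⟩ :
            {v : T // g v = Projectivization.mk K w hw})) := by
        constructor
        · intro u u' huu
          obtain ⟨i, hi⟩ := Function.ne_iff.mp hw
          have h1 : (u : K) • w = (u' : K) • w := by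
            have := congrArg (fun a => (a.1.1 : Fin 3 → K)) huu
            simpa using this
          have h2 : (u : K) * w i = (u' : K) * w i := congrFun h1 i
          exact Units.ext (mul_right_cancel₀ (by simpa using hi) h2)
        · rintro ⟨⟨v, hv⟩, hvx⟩
          obtain ⟨a, ha⟩ := (Projectivization.mk_eq_mk_iff K _ _ _ hw).mp hvx
          rw [Units.smul_def] at ha
          exact ⟨a, Subtype.ext (Subtype.ext ha)⟩
      have := Nat.card_eq_of_bijective _ hbij
      rw [← this, Nat.card_eq_fintype_card, Fintype.card_units, hqdef]
  have hsum : Fintype.card T = Nat.card (ℙ K (Fin 3 → K)) * (q - 1) := by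
    rw [Fintype.card_congr (Equiv.sigmaFiberEquiv g).symm, Fintype.card_sigma]
    have : ∀ x : ℙ K (Fin 3 → K), Fintype.card {v : T // g v = x} = q - 1 := by
      intro x; rw [← Nat.card_eq_fintype_card]; exact hfib x
    simp_rw [this]
    rw [Finset.sum_const, Finset.card_univ, smul_eq_mul, Nat.card_eq_fintype_card]
  rw [hTcard] at hsum
  -- pass to ℤ
  have hZ : ((q : ℤ) ^ 3 - 1) = (Nat.card (ℙ K (Fin 3 → K)) : ℤ) * ((q : ℤ) - 1) := by
    have h1 : ((q ^ 3 - 1 : ℕ) : ℤ) = (q : ℤ) ^ 3 - 1 := by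
      push_cast [Nat.cast_sub (Nat.one_le_pow 3 q (by omega))]; ring
    have h2 : ((Nat.card (ℙ K (Fin 3 → K)) * (q - 1) : ℕ) : ℤ)
        = (Nat.card (ℙ K (Fin 3 → K)) : ℤ) * ((q : ℤ) - 1) := by
      push_cast [Nat.cast_sub (by omega : 1 ≤ q)]; ring
    rw [← h1, ← h2, hsum]
  have hfact : ((q : ℤ) ^ 2 + q + 1) * ((q : ℤ) - 1) = (q : ℤ) ^ 3 - 1 := by ring
  have hne : ((q : ℤ) - 1) ≠ 0 := by
    have : (2 : ℤ) ≤ (q : ℤ) := by exact_mod_cast hq2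
    omega
  have : (Nat.card (ℙ K (Fin 3 → K)) : ℤ) = (q : ℤ) ^ 2 + q + 1 :=
    mul_right_cancel₀ hne (by rw [← hZ, hfact])
  exact_mod_cast this

lemma order_eq :
    ProjectivePlane.order (ℙ K (Fin 3 → K)) (ℙ K (Fin 3 → K)) = Fintype.card K := by
  classical
  haveI : Finite (ℙ K (Fin 3 → K)) := Quotient.finite _
  letI : Fintype (ℙ K (Fin 3 → K)) := Fintype.ofFinite _
  have h1 := ProjectivePlane.card_points (ℙ K (Fin 3 → K)) (ℙ K (Fin 3 → K))
  have h2 := card_projectivization K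
  rw [Nat.card_eq_fintype_card] at h2
  rw [h2] at h1
  have hsm : StrictMono (fun t : ℕ => t ^ 2 + t + 1) := by
    intro a b h
    dsimp only
    have := Nat.pow_lt_pow_left h (two_ne_zero)
    omega
  exact (hsm.injective h1.symm)

end ProjPlane

lemma upper_bound_construction (q : ℕ) (K : Type) [Field K] [Fintype K]
    (hK : Fintype.card K = q) :
    ∃ A : Fin (q ^ 2 + q + 1) → Fin (q ^ 2 + q + 1) → Prop,
      Irreflexive A ∧ Mediated A ∧ maxInDeg A ≤ q := by
  classical
  haveI : Finite (ℙ K (Fin 3 → K)) := Quotient.finite _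
  letI : Fintype (ℙ K (Fin 3 → K)) := Fintype.ofFinite _
  set P := ℙ K (Fin 3 → K) with hP
  have hcard : Fintype.card P = q ^ 2 + q + 1 := by
    rw [← Nat.card_eq_fintype_card, card_projectivization, hK]
  have horder : ProjectivePlane.order P P = q := by rw [order_eq, hK]
  set t : P → Finset P := fun l => Finset.univ.filter (· ∈ l) with ht
  have htcard : ∀ l : P, (t l).card = q + 1 := by
    intro l
    have h1 : (t l).card = Fintype.card {p : P // p ∈ l} := (Fintype.card_subtype _).symm
    have h2 : pointCount P l = Fintype.card {p : P // p ∈ l} := Nat.card_eq_fintype_card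
    rw [h1, ← h2, ProjectivePlane.pointCount_eq, horder]
  have hlcount : ∀ p : P, (Finset.univ.filter fun l : P => p ∈ l).card = q + 1 := by
    intro p
    have h1 : (Finset.univ.filter fun l : P => p ∈ l).card
        = Fintype.card {l : P // p ∈ l} := (Fintype.card_subtype _).symm
    have h2 : lineCount P p = Fintype.card {l : P // p ∈ l} := Nat.card_eq_fintype_card
    rw [h1, ← h2, ProjectivePlane.lineCount_eq, horder]
  have hall : ∀ s : Finset P, s.card ≤ (s.biUnion t).card := by
    intro s
    have hmem : ∀ x ∈ s.sigma t, x.2 ∈ s.biUnion t := by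
      intro x hx
      rw [Finset.mem_sigma] at hx
      exact Finset.mem_biUnion.mpr ⟨x.1, hx.1, hx.2⟩
    have h1 : (s.sigma t).card = s.card * (q + 1) := by
      rw [Finset.card_sigma, Finset.sum_congr rfl fun a _ => htcard a, Finset.sum_const,
        smul_eq_mul]
    have h2 := Finset.card_eq_sum_card_fiberwise hmem
    have h3 : ∀ p ∈ s.biUnion t, ((s.sigma t).filter fun x => x.2 = p).card ≤ q + 1 := by
      intro p _
      rw [← hlcount p]
      apply Finset.card_le_card_of_injOn (fun x => x.1)
      · intro x hx
        rw [Finset.mem_coe, Finset.mem_filter, Finset.mem_sigma] at hx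
        obtain ⟨⟨hx1, hx2⟩, hx3⟩ := hx
        have : x.2 ∈ Finset.univ.filter (· ∈ x.1) := hx2
        rw [Finset.mem_filter] at this
        rw [Finset.mem_coe, Finset.mem_filter]
        exact ⟨Finset.mem_univ _, hx3 ▸ this.2⟩
      · intro x hx y hy hxy
        simp only [Finset.coe_filter, Set.mem_setOf_eq] at hx hy
        exact Sigma.ext hxy (heq_of_eq (hx.2.trans hy.2.symm))
    have h4 : (s.sigma t).card ≤ (s.biUnion t).card * (q + 1) := by
      rw [h2]
      calc ∑ p ∈ s.biUnion t, ((s.sigma t).filter fun x => x.2 = p).card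
          ≤ ∑ _p ∈ s.biUnion t, (q + 1) := Finset.sum_le_sum h3
        _ = (s.biUnion t).card * (q + 1) := by rw [Finset.sum_const, smul_eq_mul]
    rw [h1] at h4
    exact Nat.le_of_mul_le_mul_right h4 (by omega)
  obtain ⟨m, hminj, hmmem⟩ := (Finset.all_card_le_biUnion_card_iff_exists_injective t).mp hall
  have hbij : Function.Bijective m := Finite.injective_iff_bijective.mp hminj
  set e : P ≃ P := Equiv.ofBijective m hbij with he
  have hml : ∀ l : P, (m l : P) ∈ l := by
    intro l
    have := hmmem l
    rw [ht, Finset.mem_filter] at this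
    exact this.2
  set φ : Fin (q ^ 2 + q + 1) ≃ P := (Fintype.equivFinOfCardEq hcard).symm with hφ
  refine ⟨fun x z => φ x ∈ (e.symm (φ z) : P) ∧ x ≠ z, fun x hx => hx.2 rfl, ?_, ?_⟩
  · intro x y hxy
    have hxy' : φ x ≠ φ y := fun h => hxy (φ.injective h)
    set l := HasLines.mkLine (P := P) (L := P) hxy' with hl
    have hz : e.symm (φ (φ.symm (e l))) = l := by
      rw [Equiv.apply_symm_apply, Equiv.symm_apply_apply]
    refine ⟨φ.symm (e l), ?_, ?_⟩
    · by_cases hx : x = φ.symm (e l)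
      · exact Or.inl hx
      · exact Or.inr ⟨by rw [hz]; exact (HasLines.mkLine_ax hxy').1, hx⟩
    · by_cases hy : y = φ.symm (e l)
      · exact Or.inl hy
      · exact Or.inr ⟨by rw [hz]; exact (HasLines.mkLine_ax hxy').2, hy⟩
  · apply Finset.sup_le
    intro z _
    have hzl : (φ z : P) ∈ (e.symm (φ z) : P) := by
      have h1 : e (e.symm (φ z)) = φ z := Equiv.apply_symm_apply e (φ z)
      have h2 : (m (e.symm (φ z)) : P) ∈ (e.symm (φ z) : P) := hml _
      have h3 : m (e.symm (φ z)) = e (e.symm (φ z)) := rfl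
      rwa [h3, h1] at h2
    have hG : (Finset.univ.filter fun x : Fin (q ^ 2 + q + 1) =>
        φ x ∈ (e.symm (φ z) : P)).card = q + 1 := by
      have h1 : (Finset.univ.filter fun x : Fin (q ^ 2 + q + 1) =>
          φ x ∈ (e.symm (φ z) : P)).card
          = Fintype.card {x : Fin (q ^ 2 + q + 1) // φ x ∈ (e.symm (φ z) : P)} :=
        (Fintype.card_subtype _).symm
      have h2 : Fintype.card {x : Fin (q ^ 2 + q + 1) // φ x ∈ (e.symm (φ z) : P)}
          = Fintype.card {p : P // p ∈ (e.symm (φ z) : P)} :=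
        Fintype.card_congr (φ.subtypeEquiv fun x => Iff.rfl)
      have h3 : pointCount P (e.symm (φ z) : P)
          = Fintype.card {p : P // p ∈ (e.symm (φ z) : P)} := Nat.card_eq_fintype_card
      rw [h1, h2, ← h3, ProjectivePlane.pointCount_eq, horder]
    have hdeg : inDeg (fun x z => φ x ∈ (e.symm (φ z) : P) ∧ x ≠ z) z
        = (Finset.univ.filter fun x => φ x ∈ (e.symm (φ z) : P) ∧ x ≠ z).card := by
      rw [inDeg, Nat.card_eq_fintype_card, Fintype.card_subtype]
    rw [hdeg]
    have hzmem : z ∈ Finset.univ.filter fun x : Fin (q ^ 2 + q + 1) =>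
        φ x ∈ (e.symm (φ z) : P) := Finset.mem_filter.mpr ⟨Finset.mem_univ _, hzl⟩
    have hsub : (Finset.univ.filter fun x => φ x ∈ (e.symm (φ z) : P) ∧ x ≠ z)
        ⊆ (Finset.univ.filter fun x : Fin (q ^ 2 + q + 1) =>
            φ x ∈ (e.symm (φ z) : P)).erase z := by
      intro x hx
      rw [Finset.mem_filter] at hx
      exact Finset.mem_erase.mpr ⟨hx.2.2, Finset.mem_filter.mpr ⟨Finset.mem_univ _, hx.2.1⟩⟩
    calc (Finset.univ.filter fun x => φ x ∈ (e.symm (φ z) : P) ∧ x ≠ z).card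
        ≤ ((Finset.univ.filter fun x : Fin (q ^ 2 + q + 1) =>
            φ x ∈ (e.symm (φ z) : P)).erase z).card := Finset.card_le_card hsub
      _ = q := by rw [Finset.card_erase_of_mem hzmem, hG]; omega

/-- For each prime power `q`, `μ(q² + q + 1) = f(q² + q + 1) = q`. -/
theorem mu_projective_plane_order (q : ℕ) (hq : IsPrimePow q) :
    mu (q ^ 2 + q + 1) = q ∧ f (q ^ 2 + q + 1) = q := by
  have hq1 : 1 ≤ q := hq.one_lt.le
  refine ⟨?_, f_val q⟩
  obtain ⟨p, k, hp, hk, rfl⟩ := hq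
  haveI : Fact (Nat.Prime p) := ⟨hp.nat_prime⟩
  haveI : Finite (GaloisField p k) := by infer_instance
  letI : Fintype (GaloisField p k) := Fintype.ofFinite _
  have hcardK : Fintype.card (GaloisField p k) = p ^ k := by
    have := GaloisField.card p k (by omega)
    rwa [Nat.card_eq_fintype_card] at this
  obtain ⟨A, hirr, hmed, hle⟩ := upper_bound_construction (p ^ k) (GaloisField p k) hcardK
  apply le_antisymm
  · refine le_trans (Nat.sInf_le ?_) hle
    exact ⟨A, hirr, hmed, rfl⟩
  · have hne : { d : ℕ | ∃ A : Fin ((p ^ k) ^ 2 + p ^ k + 1) → Fin ((p ^ k) ^ 2 + p ^ k + 1)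
        → Prop, Irreflexive A ∧ Mediated A ∧ maxInDeg A = d }.Nonempty :=
      ⟨maxInDeg A, A, hirr, hmed, rfl⟩
    obtain ⟨A', _, hmed', hA'⟩ := Nat.sInf_mem hne
    calc p ^ k ≤ maxInDeg A' := lower_bound (p ^ k) hq1 A' hmed'
      _ = mu ((p ^ k) ^ 2 + p ^ k + 1) := hA'
end

section
/- Let q be a prime power and let n = q² + q + 1 + m(q+1) − t, where 1 ≤ m ≤ q+1 and 0 ≤ t ≤ q. Then μ(n) ≤ q + m; that is, there exists a mediated digraph on n vertices whose maximum in-degree is at most q + m. -/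
noncomputable section
set_option linter.unusedSectionVars false
open Finset

namespace MedCon

variable (K : Type) [Field K] [Fintype K] [DecidableEq K] (m : ℕ) (T : Finset K)

abbrev Avt := {v : K × K // ¬ (v.2 = 1 ∧ v.1 ∈ T)}
abbrev Vt := Avt K T ⊕ (Fin (m+1) × Option K)

def colF (d : Option K) : Finset (Vt K m T) :=
  (univ : Finset (Fin (m+1))).image fun r => Sum.inr (r, d)
def rowF (r : Fin (m+1)) : Finset (Vt K m T) :=
  (univ : Finset (Option K)).image fun d => Sum.inr (r, d)
def lineS (j c : K) : Finset (Vt K m T) :=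
  ((univ : Finset (Avt K T)).filter fun v => v.1.2 = j * v.1.1 + c).image Sum.inl
def lineV (c : K) : Finset (Vt K m T) :=
  ((univ : Finset (Avt K T)).filter fun v => v.1.1 = c).image Sum.inl
def riders (j c : K) : Finset (Vt K m T) :=
  (T.filter fun d => 1 - j * d = c).image fun d => Sum.inr (Fin.last m, some d)
def slopeBlock (j c : K) : Finset (Vt K m T) :=
  lineS K m T j c ∪ colF K m T (some j) ∪ riders K m T j c
def vertBlock (c : K) : Finset (Vt K m T) :=
  lineV K m T c ∪ colF K m T none
def gridBlock (d : Option K) (r : Fin (m+1)) : Finset (Vt K m T) :=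
  colF K m T d ∪ rowF K m T r

lemma mem_colF (r : Fin (m+1)) (d : Option K) : (Sum.inr (r, d) : Vt K m T) ∈ colF K m T d :=
  mem_image.2 ⟨r, mem_univ r, rfl⟩

lemma mem_rowF (r : Fin (m+1)) (d : Option K) : (Sum.inr (r, d) : Vt K m T) ∈ rowF K m T r :=
  mem_image.2 ⟨d, mem_univ d, rfl⟩

-- card lemmas
lemma card_colF (d : Option K) : (colF K m T d).card = m + 1 := by
  rw [colF, card_image_of_injective _ (fun a b h => by simpa using h)]
  simp

lemma card_rowF (r : Fin (m+1)) : (rowF K m T r).card = Fintype.card K + 1 := by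
  rw [rowF, card_image_of_injective _ (fun a b h => by simpa using h)]
  simp

lemma card_lineS_add_riders (j c : K) :
    (lineS K m T j c).card + (riders K m T j c).card ≤ Fintype.card K := by
  have hdisj : Disjoint (lineS K m T j c) (riders K m T j c) := by
    rw [disjoint_left]
    intro a ha hb
    rw [lineS, mem_image] at ha
    rw [riders, mem_image] at hb
    obtain ⟨v, -, rfl⟩ := ha
    obtain ⟨d, -, hd2⟩ := hb
    cases hd2
  rw [← card_union_of_disjoint hdisj]
  have := card_le_card_of_injOn
    (f := fun z : Vt K m T => Sum.elim (fun v : Avt K T => v.1.1) (fun rd => rd.2.getD 0) z)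
    (s := lineS K m T j c ∪ riders K m T j c) (t := (univ : Finset K))
    (fun a _ => mem_univ _) ?_
  · simpa using this
  · intro a ha b hb hab
    simp only [coe_union, Set.mem_union, mem_coe] at ha hb
    have memS : ∀ x, x ∈ lineS K m T j c →
        ∃ v : Avt K T, v.1.2 = j * v.1.1 + c ∧ x = Sum.inl v := by
      intro x hx
      rw [lineS, mem_image] at hx
      obtain ⟨v, hv, rfl⟩ := hx
      exact ⟨v, (mem_filter.1 hv).2, rfl⟩
    have memR : ∀ x, x ∈ riders K m T j c →
        ∃ d : K, d ∈ T ∧ 1 - j * d = c ∧ x = Sum.inr (Fin.last m, some d) := by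
      intro x hx
      rw [riders, mem_image] at hx
      obtain ⟨d, hd, rfl⟩ := hx
      exact ⟨d, (mem_filter.1 hd).1, (mem_filter.1 hd).2, rfl⟩
    have key : ∀ (v : Avt K T) (d : K), d ∈ T → 1 - j * d = c → v.1.2 = j * v.1.1 + c →
        v.1.1 = d → False := by
      intro v d hdT hdc hline hx
      apply v.2
      constructor
      · rw [hline, hx]; linear_combination -hdc
      · rw [hx]; exact hdT
    rcases ha with ha | ha <;> rcases hb with hb | hb
    · obtain ⟨v, hv, rfl⟩ := memS _ ha
      obtain ⟨w, hw, rfl⟩ := memS _ hb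
      simp only [Sum.elim_inl] at hab
      have : v.1 = w.1 := by
        have h2 : v.1.2 = w.1.2 := by rw [hv, hw, hab]
        exact Prod.ext hab h2
      exact congrArg Sum.inl (Subtype.ext this)
    · obtain ⟨v, hv, rfl⟩ := memS _ ha
      obtain ⟨d, hdT, hdc, rfl⟩ := memR _ hb
      simp only [Sum.elim_inl, Sum.elim_inr, Option.getD_some] at hab
      exact absurd (key v d hdT hdc hv hab) (fun h => h)
    · obtain ⟨d, hdT, hdc, rfl⟩ := memR _ ha
      obtain ⟨v, hv, rfl⟩ := memS _ hb
      simp only [Sum.elim_inl, Sum.elim_inr, Option.getD_some] at hab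
      exact absurd (key v d hdT hdc hv hab.symm) (fun h => h)
    · obtain ⟨d, _, _, rfl⟩ := memR _ ha
      obtain ⟨d', _, _, rfl⟩ := memR _ hb
      simp only [Sum.elim_inr, Option.getD_some] at hab
      rw [hab]

lemma card_lineV (c : K) : (lineV K m T c).card ≤ Fintype.card K := by
  have := card_le_card_of_injOn
    (f := fun z : Vt K m T => Sum.elim (fun v : Avt K T => v.1.2) (fun rd => (0:K)) z)
    (s := lineV K m T c) (t := (univ : Finset K)) (fun a _ => mem_univ _) ?_
  · simpa using this
  · intro a ha b hb hab
    rw [mem_coe, lineV, mem_image] at ha hb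
    obtain ⟨v, hv, rfl⟩ := ha
    obtain ⟨w, hw, rfl⟩ := hb
    simp only [Sum.elim_inl] at hab
    have hx : v.1.1 = w.1.1 := by rw [(mem_filter.1 hv).2, (mem_filter.1 hw).2]
    exact congrArg Sum.inl (Subtype.ext (Prod.ext hx hab))

lemma card_slopeBlock (j c : K) :
    (slopeBlock K m T j c).card ≤ Fintype.card K + (m + 1) := by
  have hsub : slopeBlock K m T j c ⊆
      (lineS K m T j c ∪ riders K m T j c) ∪ colF K m T (some j) := by
    intro x hx
    rw [slopeBlock] at hx
    rw [mem_union, mem_union]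
    rw [mem_union, mem_union] at hx
    tauto
  calc (slopeBlock K m T j c).card
      ≤ ((lineS K m T j c ∪ riders K m T j c) ∪ colF K m T (some j)).card :=
        card_le_card hsub
    _ ≤ (lineS K m T j c ∪ riders K m T j c).card + (colF K m T (some j)).card :=
        card_union_le _ _
    _ ≤ ((lineS K m T j c).card + (riders K m T j c).card) + (m+1) := by
        rw [card_colF]; exact Nat.add_le_add_right (card_union_le _ _) _
    _ ≤ Fintype.card K + (m+1) :=
        Nat.add_le_add_right (card_lineS_add_riders K m T j c) _

lemma card_vertBlock (c : K) :
    (vertBlock K m T c).card ≤ Fintype.card K + (m + 1) := by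
  calc (vertBlock K m T c).card ≤ (lineV K m T c).card + (colF K m T none).card :=
        card_union_le _ _
    _ ≤ Fintype.card K + (m+1) := by
        rw [card_colF]; exact Nat.add_le_add_right (card_lineV K m T c) _

lemma card_gridBlock (d : Option K) (r : Fin (m+1)) :
    (gridBlock K m T d r).card ≤ Fintype.card K + (m + 1) := by
  have h1 : gridBlock K m T d r = colF K m T d ∪ (rowF K m T r \ colF K m T d) := by
    rw [gridBlock, union_sdiff_self_eq_union]
  have h2 : rowF K m T r \ colF K m T d ⊆ (rowF K m T r).erase (Sum.inr (r, d)) := by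
    intro x hx
    rw [mem_sdiff] at hx
    exact mem_erase.2 ⟨fun he => hx.2 (he ▸ mem_colF K m T r d), hx.1⟩
  rw [h1, card_union_of_disjoint disjoint_sdiff]
  have h3 : (rowF K m T r \ colF K m T d).card ≤ Fintype.card K := by
    calc (rowF K m T r \ colF K m T d).card ≤ ((rowF K m T r).erase (Sum.inr (r, d))).card :=
          card_le_card h2
      _ = (rowF K m T r).card - 1 := card_erase_of_mem (mem_rowF K m T r d)
      _ = Fintype.card K := by rw [card_rowF]; omega
  rw [card_colF]
  omega

def B : Vt K m T → Finset (Vt K m T)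
  | Sum.inl v => if v.1.2 = 0 then vertBlock K m T v.1.1
      else slopeBlock K m T v.1.1 (v.1.2 - v.1.1 ^ 2)
  | Sum.inr (r, none) => gridBlock K m T none r
  | Sum.inr (r, some d) =>
      if r = Fin.last m then slopeBlock K m T d (-(d ^ 2))
      else if r = 0 ∧ d ∈ T then slopeBlock K m T d (1 - d ^ 2)
      else gridBlock K m T (some d) r

lemma mem_lineS {j c : K} (v : Avt K T) (h : v.1.2 = j * v.1.1 + c) :
    (Sum.inl v : Vt K m T) ∈ lineS K m T j c :=
  mem_image_of_mem _ (mem_filter.2 ⟨mem_univ _, h⟩)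

lemma mem_lineV {c : K} (v : Avt K T) (h : v.1.1 = c) :
    (Sum.inl v : Vt K m T) ∈ lineV K m T c :=
  mem_image_of_mem _ (mem_filter.2 ⟨mem_univ _, h⟩)

lemma mem_riders {j c d : K} (hd : d ∈ T) (h : 1 - j * d = c) :
    (Sum.inr (Fin.last m, some d) : Vt K m T) ∈ riders K m T j c :=
  mem_image.2 ⟨d, mem_filter.2 ⟨hd, h⟩, rfl⟩

lemma lineS_subset_slopeBlock {j c : K} {x : Vt K m T} (h : x ∈ lineS K m T j c) :
    x ∈ slopeBlock K m T j c :=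
  mem_union_left _ (mem_union_left _ h)

lemma colF_subset_slopeBlock {j c : K} {x : Vt K m T} (h : x ∈ colF K m T (some j)) :
    x ∈ slopeBlock K m T j c :=
  mem_union_left _ (mem_union_right _ h)

lemma riders_subset_slopeBlock {j c : K} {x : Vt K m T} (h : x ∈ riders K m T j c) :
    x ∈ slopeBlock K m T j c :=
  mem_union_right _ h

lemma card_B_le (z : Vt K m T) : (B K m T z).card ≤ Fintype.card K + (m + 1) := by
  match z with
  | Sum.inl v =>
    rw [B]
    split
    · exact card_vertBlock K m T _
    · exact card_slopeBlock K m T _ _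
  | Sum.inr (r, none) => rw [B]; exact card_gridBlock K m T _ _
  | Sum.inr (r, some d) =>
    rw [B]
    split
    · exact card_slopeBlock K m T _ _
    split
    · exact card_slopeBlock K m T _ _
    · exact card_gridBlock K m T _ _

lemma mem_B_self (z : Vt K m T) : z ∈ B K m T z := by
  match z with
  | Sum.inl v =>
    rw [B]
    split
    · exact mem_union_left _ (mem_lineV K m T v rfl)
    · exact lineS_subset_slopeBlock K m T (mem_lineS K m T v (by ring))
  | Sum.inr (r, none) => rw [B]; exact mem_union_left _ (mem_colF K m T r none)
  | Sum.inr (r, some d) =>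
    rw [B]
    split
    · rename_i h; exact h ▸ colF_subset_slopeBlock K m T (mem_colF K m T _ (some d))
    split
    · rename_i h h2; rw [h2.1]; exact colF_subset_slopeBlock K m T (mem_colF K m T _ (some d))
    · exact mem_union_left _ (mem_colF K m T r (some d))

variable {K m T}

lemma exists_B_eq_vertBlock (c : K) : ∃ z, B K m T z = vertBlock K m T c :=
  ⟨Sum.inl ⟨(c, 0), fun h => zero_ne_one h.1⟩, by rw [B]; simp⟩

lemma exists_B_eq_gridBlock_none (r : Fin (m+1)) :
    ∃ z, B K m T z = gridBlock K m T none r := ⟨Sum.inr (r, none), by rw [B]⟩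

lemma exists_B_eq_gridBlock_some (d : K) (r : Fin (m+1)) (h1 : r ≠ Fin.last m)
    (h2 : ¬ (r = 0 ∧ d ∈ T)) : ∃ z, B K m T z = gridBlock K m T (some d) r :=
  ⟨Sum.inr (r, some d), by rw [B]; rw [if_neg h1, if_neg h2]⟩

lemma exists_B_eq_slopeBlock (hm : m ≠ 0) (j c : K) :
    ∃ z, B K m T z = slopeBlock K m T j c := by
  by_cases h1 : c = -(j^2)
  · refine ⟨Sum.inr (Fin.last m, some j), ?_⟩
    rw [B, if_pos rfl, h1]
  by_cases h2 : j ∈ T ∧ c = 1 - j^2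
  · refine ⟨Sum.inr (0, some j), ?_⟩
    have h0 : (0 : Fin (m+1)) ≠ Fin.last m := by
      intro h
      have := congrArg Fin.val h
      simp [Fin.last] at this
      omega
    rw [B, if_neg h0, if_pos ⟨rfl, h2.1⟩, h2.2]
  · refine ⟨Sum.inl ⟨(j, c + j^2), ?_⟩, ?_⟩
    · rintro ⟨hy, hx⟩
      exact h2 ⟨hx, by linear_combination hy⟩
    · have hy0 : (c + j^2 : K) ≠ 0 := fun h => h1 (by linear_combination h)
      rw [B, if_neg hy0]
      norm_num

lemma cover_aff_aff (hm : m ≠ 0) (u v : Avt K T) :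
    ∃ z, (Sum.inl u : Vt K m T) ∈ B K m T z ∧ (Sum.inl v : Vt K m T) ∈ B K m T z := by
  by_cases hx : u.1.1 = v.1.1
  · obtain ⟨z, hz⟩ := exists_B_eq_vertBlock (m := m) u.1.1
    exact ⟨z, hz ▸ mem_union_left _ (mem_lineV K m T u rfl),
      hz ▸ mem_union_left _ (mem_lineV K m T v hx.symm)⟩
  · set j := (u.1.2 - v.1.2) / (u.1.1 - v.1.1) with hj
    obtain ⟨z, hz⟩ := exists_B_eq_slopeBlock hm j (u.1.2 - j * u.1.1)
    have hjj : j * (u.1.1 - v.1.1) = u.1.2 - v.1.2 :=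
      div_mul_cancel₀ _ (sub_ne_zero.2 hx)
    refine ⟨z, hz ▸ lineS_subset_slopeBlock K m T (mem_lineS K m T u (by ring)),
      hz ▸ lineS_subset_slopeBlock K m T (mem_lineS K m T v (by linear_combination hjj))⟩

lemma cover_aff_grid (hm : m ≠ 0) (u : Avt K T) (r : Fin (m+1)) (d : Option K) :
    ∃ z, (Sum.inl u : Vt K m T) ∈ B K m T z ∧ (Sum.inr (r, d) : Vt K m T) ∈ B K m T z := by
  match d with
  | none =>
    obtain ⟨z, hz⟩ := exists_B_eq_vertBlock (m := m) u.1.1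
    exact ⟨z, hz ▸ mem_union_left _ (mem_lineV K m T u rfl),
      hz ▸ mem_union_right _ (mem_colF K m T r none)⟩
  | some s =>
    obtain ⟨z, hz⟩ := exists_B_eq_slopeBlock hm s (u.1.2 - s * u.1.1)
    exact ⟨z, hz ▸ lineS_subset_slopeBlock K m T (mem_lineS K m T u (by ring)),
      hz ▸ colF_subset_slopeBlock K m T (mem_colF K m T r (some s))⟩

lemma cover_grid_grid (hm : m ≠ 0) (r r' : Fin (m+1)) (d d' : Option K) :
    ∃ z, (Sum.inr (r, d) : Vt K m T) ∈ B K m T z ∧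
      (Sum.inr (r', d') : Vt K m T) ∈ B K m T z := by
  by_cases hd : d = d'
  · subst hd
    match d with
    | none =>
      obtain ⟨z, hz⟩ := exists_B_eq_gridBlock_none (K := K) (T := T) r
      exact ⟨z, hz ▸ mem_union_left _ (mem_colF K m T r none),
        hz ▸ mem_union_left _ (mem_colF K m T r' none)⟩
    | some s =>
      obtain ⟨z, hz⟩ := exists_B_eq_slopeBlock hm s 0
      exact ⟨z, hz ▸ colF_subset_slopeBlock K m T (mem_colF K m T r (some s)),
        hz ▸ colF_subset_slopeBlock K m T (mem_colF K m T r' (some s))⟩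
  · by_cases hr : r = r'
    · subst hr
      obtain ⟨z, hz⟩ := exists_B_eq_gridBlock_none (K := K) (T := T) r
      exact ⟨z, hz ▸ mem_union_right _ (mem_rowF K m T r d),
        hz ▸ mem_union_right _ (mem_rowF K m T r d')⟩
    · match d, d' with
      | none, d' =>
        obtain ⟨z, hz⟩ := exists_B_eq_gridBlock_none (K := K) (T := T) r'
        exact ⟨z, hz ▸ mem_union_left _ (mem_colF K m T r none),
          hz ▸ mem_union_right _ (mem_rowF K m T r' d')⟩
      | some s, none =>
        obtain ⟨z, hz⟩ := exists_B_eq_gridBlock_none (K := K) (T := T) r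
        exact ⟨z, hz ▸ mem_union_right _ (mem_rowF K m T r (some s)),
          hz ▸ mem_union_left _ (mem_colF K m T r' none)⟩
      | some s, some s' =>
        by_cases h1 : r' ≠ Fin.last m ∧ ¬ (r' = 0 ∧ s ∈ T)
        · obtain ⟨z, hz⟩ := exists_B_eq_gridBlock_some s r' h1.1 h1.2
          exact ⟨z, hz ▸ mem_union_left _ (mem_colF K m T r (some s)),
            hz ▸ mem_union_right _ (mem_rowF K m T r' (some s'))⟩
        by_cases h2 : r ≠ Fin.last m ∧ ¬ (r = 0 ∧ s' ∈ T)
        · obtain ⟨z, hz⟩ := exists_B_eq_gridBlock_some s' r h2.1 h2.2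
          exact ⟨z, hz ▸ mem_union_right _ (mem_rowF K m T r (some s)),
            hz ▸ mem_union_left _ (mem_colF K m T r' (some s'))⟩
        · push_neg at h1 h2
          rcases Classical.em (r' = Fin.last m) with hA | hA
          · -- r' = last, so r ≠ last, hence r = 0 and s' ∈ T
            have hB : r = 0 ∧ s' ∈ T := by
              rcases Classical.em (r = Fin.last m) with hC | hC
              · exact absurd (hC.trans hA.symm) hr
              · exact h2 hC
            obtain ⟨z, hz⟩ := exists_B_eq_slopeBlock hm s (1 - s * s')
            refine ⟨z, hz ▸ colF_subset_slopeBlock K m T (mem_colF K m T r (some s)),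
              hz ▸ riders_subset_slopeBlock K m T ?_⟩
            rw [hA]
            exact mem_riders K m T hB.2 rfl
          · have hB : r' = 0 ∧ s ∈ T := h1 hA
            have hC : r = Fin.last m := by
              rcases Classical.em (r = Fin.last m) with hC | hC
              · exact hC
              · have := h2 hC
                rw [this.1, hB.1] at hr
                exact absurd rfl hr
            obtain ⟨z, hz⟩ := exists_B_eq_slopeBlock hm s' (1 - s' * s)
            refine ⟨z, hz ▸ riders_subset_slopeBlock K m T ?_,
              hz ▸ colF_subset_slopeBlock K m T (mem_colF K m T r' (some s'))⟩
            rw [hC]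
            exact mem_riders K m T hB.2 rfl

lemma cover (hm : m ≠ 0) (a b : Vt K m T) :
    ∃ z, a ∈ B K m T z ∧ b ∈ B K m T z := by
  match a, b with
  | Sum.inl u, Sum.inl v => exact cover_aff_aff hm u v
  | Sum.inl u, Sum.inr (r, d) => exact cover_aff_grid hm u r d
  | Sum.inr (r, d), Sum.inl u =>
    obtain ⟨z, h1, h2⟩ := cover_aff_grid hm u r d
    exact ⟨z, h2, h1⟩
  | Sum.inr (r, d), Sum.inr (r', d') => exact cover_grid_grid hm r r' d d'

lemma card_Vt {t : ℕ} (hT : T.card = t) :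
    Fintype.card (Vt K m T) =
      Fintype.card K * Fintype.card K - t + (m + 1) * (Fintype.card K + 1) := by
  have h1 : Fintype.card {v : K × K // v.2 = 1 ∧ v.1 ∈ T} = t := by
    rw [← hT, ← Fintype.card_coe T]
    exact Fintype.card_congr ⟨fun v => ⟨v.1.1, v.2.2⟩, fun d => ⟨(d.1, 1), rfl, d.2⟩,
      fun v => Subtype.ext (Prod.ext rfl v.2.1.symm), fun d => rfl⟩
  rw [Fintype.card_sum, Fintype.card_prod, Fintype.card_fin, Fintype.card_option]
  congr 1
  rw [Fintype.card_subtype_compl, h1, Fintype.card_prod]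

theorem exists_good (hm : m ≠ 0) {n : ℕ} (hn : Fintype.card (Vt K m T) = n) :
    ∃ A : Fin n → Fin n → Prop, Irreflexive A ∧ Mediated A ∧
      maxInDeg A ≤ Fintype.card K + m := by
  have e := Fintype.equivFinOfCardEq hn
  refine ⟨fun x z => x ≠ z ∧ e.symm x ∈ B K m T (e.symm z), fun x hx => hx.1 rfl, ?_, ?_⟩
  · intro x y _
    obtain ⟨w, hw1, hw2⟩ := cover hm (e.symm x) (e.symm y)
    refine ⟨e w, ?_, ?_⟩
    · rcases eq_or_ne x (e w) with h | h
      · exact Or.inl h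
      · exact Or.inr ⟨h, by rwa [Equiv.symm_apply_apply]⟩
    · rcases eq_or_ne y (e w) with h | h
      · exact Or.inl h
      · exact Or.inr ⟨h, by rwa [Equiv.symm_apply_apply]⟩
  · unfold maxInDeg
    apply Finset.sup_le
    intro z _
    unfold inDeg
    show Nat.card {x : Fin n // x ≠ z ∧ e.symm x ∈ B K m T (e.symm z)} ≤ Fintype.card K + m
    have step1 : Nat.card {x : Fin n // x ≠ z ∧ e.symm x ∈ B K m T (e.symm z)} ≤
        Nat.card {v : Vt K m T // v ∈ (B K m T (e.symm z)).erase (e.symm z)} := by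
      apply Nat.card_le_card_of_injective
        (f := fun x => ⟨e.symm x.1, mem_erase.2
          ⟨fun hh => x.2.1 (e.symm.injective hh), x.2.2⟩⟩)
      intro a b hab
      exact Subtype.ext (e.symm.injective (congrArg Subtype.val hab))
    have step2 : Nat.card {v : Vt K m T // v ∈ (B K m T (e.symm z)).erase (e.symm z)} =
        ((B K m T (e.symm z)).erase (e.symm z)).card :=
      Nat.card_eq_finsetCard _
    have step3 : ((B K m T (e.symm z)).erase (e.symm z)).card =
        (B K m T (e.symm z)).card - 1 :=
      card_erase_of_mem (mem_B_self K m T _)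
    have step4 := card_B_le K m T (e.symm z)
    have hb1 : 1 ≤ (B K m T (e.symm z)).card :=
      card_pos.2 ⟨_, mem_B_self K m T _⟩
    omega

theorem mu_bound_general (K : Type) [Field K] [Fintype K] [DecidableEq K]
    (m t : ℕ) (hm : 1 ≤ m) (ht : t ≤ Fintype.card K) :
    ∃ A : Fin (Fintype.card K ^ 2 + Fintype.card K + 1 + m * (Fintype.card K + 1) - t) →
        Fin (Fintype.card K ^ 2 + Fintype.card K + 1 + m * (Fintype.card K + 1) - t) → Prop,
      Irreflexive A ∧ Mediated A ∧ maxInDeg A ≤ Fintype.card K + m := by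
  obtain ⟨T, -, hT⟩ := Finset.exists_subset_card_eq
    (s := (univ : Finset K)) (n := t) (by rwa [card_univ])
  have hq1 : 1 ≤ Fintype.card K := Fintype.card_pos
  have hn : Fintype.card (Vt K m T) =
      Fintype.card K ^ 2 + Fintype.card K + 1 + m * (Fintype.card K + 1) - t := by
    rw [card_Vt hT]
    have e1 : Fintype.card K ^ 2 = Fintype.card K * Fintype.card K := by ring
    have e2 : (m+1) * (Fintype.card K + 1) = m * (Fintype.card K + 1) + Fintype.card K + 1 := by
      ring
    have e3 : t ≤ Fintype.card K * Fintype.card K :=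
      le_trans ht (Nat.le_mul_of_pos_left _ (by omega))
    omega
  exact exists_good (Nat.one_le_iff_ne_zero.mp hm) hn

end MedCon

end

/-- Let `q` be a prime power and `n = q² + q + 1 + m(q+1) − t` with `1 ≤ m ≤ q+1`
and `0 ≤ t ≤ q`. Then `μ(n) ≤ q + m`; that is, there is a mediated digraph on `n`
vertices whose maximum in-degree is at most `q + m`. -/
theorem mu_upper_bound (q m t : ℕ) (hq : IsPrimePow q)
    (hm1 : 1 ≤ m) (hm2 : m ≤ q + 1) (ht : t ≤ q) :
    mu (q ^ 2 + q + 1 + m * (q + 1) - t) ≤ q + m ∧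
    ∃ A : Fin (q ^ 2 + q + 1 + m * (q + 1) - t) →
          Fin (q ^ 2 + q + 1 + m * (q + 1) - t) → Prop,
      Irreflexive A ∧ Mediated A ∧ maxInDeg A ≤ q + m := by
  obtain ⟨p, k, hp, hk, rfl⟩ := hq
  haveI : Fact p.Prime := ⟨Nat.prime_iff.mpr hp⟩
  letI : Fintype (GaloisField p k) := Fintype.ofFinite _
  letI : DecidableEq (GaloisField p k) := Classical.decEq _
  have hcard : Fintype.card (GaloisField p k) = p ^ k := by
    rw [← Nat.card_eq_fintype_card]; exact GaloisField.card p k hk.ne'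
  rw [← hcard]
  obtain ⟨A, hIrr, hMed, hMax⟩ :=
    MedCon.mu_bound_general (GaloisField p k) m t hm1 (by rwa [hcard])
  exact ⟨le_trans (Nat.sInf_le ⟨A, hIrr, hMed, rfl⟩) hMax, A, hIrr, hMed, hMax⟩
end

section
/- Let q be a prime power and let s be an integer with q² + q + 2 ≤ s ≤ q² + 2q + 2. Then μ(s) = f(s) = q + 1. -/
/-! ### Auxiliary lemmas -/

open Finset

/-- Counting lower bound: in a mediated digraph, `n - 1 ≤ (Δ⁻ + 1) * Δ⁻`. -/
lemma mediated_lower {n : ℕ} (hn : 0 < n) (A : Fin n → Fin n → Prop) (hm : Mediated A) :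
    n - 1 ≤ (maxInDeg A + 1) * maxInDeg A := by
  classical
  set d := maxInDeg A with hd
  set N : Fin n → Finset (Fin n) := fun z => insert z (univ.filter (fun x => A x z)) with hN
  have hcard : ∀ z, #(N z) ≤ d + 1 := by
    intro z
    have h1 : #(univ.filter (fun x => A x z)) = inDeg A z := by
      rw [inDeg, Nat.card_eq_fintype_card, Fintype.card_subtype]
    calc #(N z) ≤ #(univ.filter (fun x => A x z)) + 1 := Finset.card_insert_le _ _
    _ ≤ d + 1 := by
      rw [h1]
      exact Nat.add_le_add_right (Finset.le_sup (Finset.mem_univ z)) 1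
  have hsub : (univ : Finset (Fin n)).offDiag ⊆ univ.biUnion (fun z => (N z).offDiag) := by
    intro p hp
    rw [Finset.mem_offDiag] at hp
    obtain ⟨z, hz1, hz2⟩ := hm p.1 p.2 hp.2.2
    refine Finset.mem_biUnion.mpr ⟨z, Finset.mem_univ z, Finset.mem_offDiag.mpr ⟨?_, ?_, hp.2.2⟩⟩
    · rcases hz1 with h | h
      · rw [h]; exact Finset.mem_insert_self z _
      · exact Finset.mem_insert_of_mem (by simp [h])
    · rcases hz2 with h | h
      · rw [h]; exact Finset.mem_insert_self z _
      · exact Finset.mem_insert_of_mem (by simp [h])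
  have key : ∀ a b : ℕ, a ≤ b → a * a - a ≤ b * b - b := by
    intro a b h
    have h1 : a * (a - 1) = a * a - a := by rw [Nat.mul_sub, mul_one]
    have h2 : b * (b - 1) = b * b - b := by rw [Nat.mul_sub, mul_one]
    rw [← h1, ← h2]
    exact Nat.mul_le_mul h (Nat.sub_le_sub_right h 1)
  have h1 : n * n - n ≤ n * ((d + 1) * (d + 1) - (d + 1)) := by
    calc n * n - n = #((univ : Finset (Fin n)).offDiag) := by
          rw [Finset.offDiag_card, Finset.card_univ, Fintype.card_fin]
    _ ≤ #(univ.biUnion fun z => (N z).offDiag) := Finset.card_le_card hsub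
    _ ≤ ∑ z, #((N z).offDiag) := Finset.card_biUnion_le
    _ ≤ ∑ _z : Fin n, ((d + 1) * (d + 1) - (d + 1)) := by
        refine Finset.sum_le_sum fun z _ => ?_
        rw [Finset.offDiag_card]
        exact key _ _ (hcard z)
    _ = n * ((d + 1) * (d + 1) - (d + 1)) := by
        rw [Finset.sum_const, Finset.card_univ, Fintype.card_fin, smul_eq_mul]
  have h2 : n * (n - 1) ≤ n * ((d + 1) * d) := by
    have e1 : n * (n - 1) = n * n - n := by rw [Nat.mul_sub, mul_one]
    have e2 : (d + 1) * d = (d + 1) * (d + 1) - (d + 1) := by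
      have := Nat.mul_sub (d + 1) (d + 1) 1
      simpa using this
    rw [e1, e2]
    exact h1
  exact Nat.le_of_mul_le_mul_left h2 hn

/-- Transporting a good digraph structure from an abstract finite type to `Fin s`. -/
lemma exists_mediated_of_equiv {s : ℕ} {V : Type} (e : Fin s ≃ V) (B : V → V → Prop)
    (hirr : Irreflexive B)
    (hmed : ∀ x y : V, x ≠ y → ∃ z, (x = z ∨ B x z) ∧ (y = z ∨ B y z))
    (hdeg : ∀ z : V, Nat.card {x // B x z} ≤ d) :
    ∃ A : Fin s → Fin s → Prop, Irreflexive A ∧ Mediated A ∧ maxInDeg A ≤ d := by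
  refine ⟨fun x z => B (e x) (e z), fun x => hirr (e x), ?_, ?_⟩
  · intro x y hxy
    obtain ⟨z, hz1, hz2⟩ := hmed (e x) (e y) (fun h => hxy (e.injective h))
    refine ⟨e.symm z, ?_, ?_⟩
    · rcases hz1 with h | h
      · exact Or.inl (by rw [← h, Equiv.symm_apply_apply])
      · exact Or.inr (by simpa using h)
    · rcases hz2 with h | h
      · exact Or.inl (by rw [← h, Equiv.symm_apply_apply])
      · exact Or.inr (by simpa using h)
  · refine Finset.sup_le fun z _ => ?_
    have : Nat.card {x : Fin s // B (e x) (e z)} = Nat.card {y : V // B y (e z)} :=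
      Nat.card_congr (e.subtypeEquiv fun a => Iff.rfl)
    rw [inDeg]
    rw [this]
    exact hdeg (e z)


open scoped LinearAlgebra.Projectivization

/-- Counting the projectivization of `K³` over a finite field. -/
lemma card_proj_mul (K : Type) [Field K] [Fintype K] :
    Nat.card (ℙ K (Fin 3 → K)) * (Fintype.card K - 1) = Fintype.card K ^ 3 - 1 := by
  classical
  haveI : Finite (ℙ K (Fin 3 → K)) := Quotient.finite _
  haveI := Fintype.ofFinite (ℙ K (Fin 3 → K))
  have fib : ∀ x : ℙ K (Fin 3 → K),
      Nat.card {w : {v : Fin 3 → K // v ≠ 0} // Projectivization.mk' K w = x}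
        = Fintype.card K - 1 := by
    intro x
    have hrep := x.rep_nonzero
    let φ : Kˣ → {w : {v : Fin 3 → K // v ≠ 0} // Projectivization.mk' K w = x} := fun a =>
      ⟨⟨(a : K) • x.rep, smul_ne_zero a.ne_zero hrep⟩, by
        rw [Projectivization.mk'_eq_mk]
        conv_rhs => rw [← x.mk_rep]
        exact (Projectivization.mk_eq_mk_iff K _ _ _ _).mpr ⟨a, rfl⟩⟩
    have hbij : Function.Bijective φ := by
      constructor
      · intro a b h
        have h' : (a : K) • x.rep = (b : K) • x.rep := by
          exact Subtype.ext_iff.mp (Subtype.ext_iff.mp h)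
        exact Units.ext (smul_left_injective K hrep h')
      · rintro ⟨⟨w, hw⟩, hmk⟩
        rw [Projectivization.mk'_eq_mk] at hmk
        conv_rhs at hmk => rw [← x.mk_rep]
        obtain ⟨a, ha⟩ := (Projectivization.mk_eq_mk_iff K _ _ _ _).mp hmk
        exact ⟨a, Subtype.ext (Subtype.ext ha)⟩
    have := Nat.card_congr (Equiv.ofBijective φ hbij)
    rw [← this, Nat.card_eq_fintype_card, Fintype.card_units]
  have htot : Nat.card {v : Fin 3 → K // v ≠ 0} = Fintype.card K ^ 3 - 1 := by
    rw [Nat.card_eq_fintype_card, Fintype.card_subtype_compl (fun v : Fin 3 → K => v = 0),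
      Fintype.card_subtype_eq, Fintype.card_fun, Fintype.card_fin]
  have hsig := Nat.card_congr (Equiv.sigmaFiberEquiv (Projectivization.mk' (V := Fin 3 → K) K))
  rw [← htot, ← hsig, Nat.card_eq_fintype_card, Nat.card_eq_fintype_card, Fintype.card_sigma]
  have : ∀ x : ℙ K (Fin 3 → K),
      Fintype.card {w : {v : Fin 3 → K // v ≠ 0} // Projectivization.mk' K w = x}
        = Fintype.card K - 1 := fun x => by rw [← Nat.card_eq_fintype_card, fib x]
  rw [Finset.sum_congr rfl fun x _ => this x, Finset.sum_const, Finset.card_univ,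
    smul_eq_mul]

/-- The main construction: a mediated digraph on `q² + q + 1 + k` vertices with max
in-degree at most `q + 1`, built from the projective plane of order `q`. -/
lemma exists_construction (q k : ℕ) (hq2 : 2 ≤ q)
    (K : Type) [Field K] [Fintype K] (hK : Fintype.card K = q)
    (hk1 : 1 ≤ k) (hk2 : k ≤ q + 1) :
    ∃ (V : Type) (_ : Fintype V), Fintype.card V = q ^ 2 + q + 1 + k ∧
      ∃ B : V → V → Prop, Irreflexive B ∧
        (∀ x y : V, x ≠ y → ∃ z, (x = z ∨ B x z) ∧ (y = z ∨ B y z)) ∧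
        ∀ z : V, Nat.card {x // B x z} ≤ q + 1 := by
  classical
  haveI : NeZero k := ⟨by omega⟩
  set P := ℙ K (Fin 3 → K) with hPdef
  haveI : Finite P := Quotient.finite _
  haveI := Fintype.ofFinite P
  -- cardinality of the plane
  have hPcard : Fintype.card P = q ^ 2 + q + 1 := by
    have h1 := card_proj_mul K
    rw [hK] at h1
    have h2 : (q ^ 2 + q + 1) * (q - 1) = q ^ 3 - 1 := by
      obtain ⟨m, rfl⟩ : ∃ m, q = m + 1 := ⟨q - 1, by omega⟩
      have h3 : (m + 1) ^ 3 = (m ^ 3 + 3 * m ^ 2 + 3 * m) + 1 := by ring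
      rw [h3, Nat.add_sub_cancel]
      have h4 : (m + 1) ^ 2 + (m + 1) + 1 = m ^ 2 + 3 * m + 3 := by ring
      rw [h4, Nat.add_sub_cancel]
      ring
    rw [← h2] at h1
    rw [← Nat.card_eq_fintype_card]
    exact Nat.eq_of_mul_eq_mul_right (show 0 < q - 1 by omega) h1
  -- the order of the plane is q
  have horder : Configuration.ProjectivePlane.order P P = q := by
    have hcp := Configuration.ProjectivePlane.card_points P P
    rw [hPcard] at hcp
    set o := Configuration.ProjectivePlane.order P P with ho
    rcases lt_trichotomy o q with h | h | h
    · have h2 := Nat.pow_lt_pow_left h (n := 2) (by omega)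
      linarith
    · exact h
    · have h2 := Nat.pow_lt_pow_left h (n := 2) (by omega)
      linarith
  have hpc : ∀ l : P, Configuration.pointCount P l = q + 1 := fun l => by
    rw [Configuration.ProjectivePlane.pointCount_eq, horder]
  have hlc : ∀ p : P, Configuration.lineCount P p = q + 1 := fun p => by
    rw [Configuration.ProjectivePlane.lineCount_eq, horder]
  -- System of distinct representatives via Hall's theorem
  set t : P → Finset P := fun v => Finset.univ.filter (fun l => v ∈ l) with ht
  have htcard : ∀ v, #(t v) = q + 1 := fun v => by
    rw [ht]
    rw [← Fintype.card_subtype, ← Nat.card_eq_fintype_card]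
    exact hlc v
  have hptfin : ∀ l : P, #(Finset.univ.filter (fun p : P => p ∈ l)) = q + 1 := fun l => by
    rw [← Fintype.card_subtype, ← Nat.card_eq_fintype_card]
    exact hpc l
  have hall : ∀ S : Finset P, #S ≤ #(S.biUnion t) := by
    intro S
    set U := S.biUnion t with hU
    set E : Finset (P × P) := (S ×ˢ U).filter (fun x => x.1 ∈ x.2) with hE
    have hcount1 : #E = #S * (q + 1) := by
      rw [Finset.card_eq_sum_card_fiberwise (f := Prod.fst) (t := S)
        (fun x hx => (Finset.mem_product.mp (Finset.mem_filter.mp hx).1).1)]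
      have hfib : ∀ v ∈ S, #(E.filter (fun x => x.1 = v)) = q + 1 := by
        intro v hv
        have himg : E.filter (fun x => x.1 = v) = {v} ×ˢ t v := by
          ext x
          rw [Finset.mem_filter, hE, Finset.mem_filter, Finset.mem_product,
            Finset.mem_product, Finset.mem_singleton]
          constructor
          · rintro ⟨⟨⟨_hS, _hU⟩, hab⟩, h1⟩
            refine ⟨h1, ?_⟩
            rw [ht]
            simp only [Finset.mem_filter, Finset.mem_univ, true_and]
            rw [← h1]
            exact hab
          · rintro ⟨h1, h2⟩
            have h2' : x.1 ∈ x.2 := by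
              rw [ht] at h2
              simp only [Finset.mem_filter, Finset.mem_univ, true_and] at h2
              rw [h1]
              exact h2
            exact ⟨⟨⟨h1 ▸ hv, hU ▸ Finset.mem_biUnion.mpr ⟨v, hv, h2⟩⟩, h2'⟩, h1⟩
        rw [himg, Finset.card_product, Finset.card_singleton, one_mul, htcard]
      rw [Finset.sum_congr rfl hfib, Finset.sum_const, smul_eq_mul]
    have hcount2 : #E ≤ #U * (q + 1) := by
      rw [Finset.card_eq_sum_card_fiberwise (f := Prod.snd) (t := U)
        (fun x hx => (Finset.mem_product.mp (Finset.mem_filter.mp hx).1).2)]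
      calc ∑ l ∈ U, #(E.filter (fun x => x.2 = l))
          ≤ ∑ _l ∈ U, (q + 1) := by
            refine Finset.sum_le_sum fun l _ => ?_
            rw [← hptfin l]
            refine Finset.card_le_card_of_injOn Prod.fst ?_ ?_
            · intro x hx
              rw [Finset.mem_coe, Finset.mem_filter, hE, Finset.mem_filter] at hx
              obtain ⟨⟨_, hab⟩, h2⟩ := hx
              simp only [Finset.mem_coe, Finset.mem_filter, Finset.mem_univ, true_and]
              exact h2 ▸ hab
            · intro x hx y hy h
              simp only [Finset.mem_coe, Finset.mem_filter] at hx hy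
              exact Prod.ext_iff.mpr ⟨h, hx.2.trans hy.2.symm⟩
        _ = #U * (q + 1) := by rw [Finset.sum_const, smul_eq_mul]
    have := hcount1 ▸ hcount2
    exact Nat.le_of_mul_le_mul_right this (by omega)
  obtain ⟨σ, hσinj, hσmem⟩ := (Finset.all_card_le_biUnion_card_iff_exists_injective t).mp hall
  have hσmem' : ∀ v : P, v ∈ σ v := by
    intro v
    have := hσmem v
    rw [ht] at this
    simpa using this
  have hσsurj : Function.Surjective σ := (Finite.injective_iff_bijective.mp hσinj).2
  -- A line M and k distinct points on it
  have hnetriv : Nonempty P := by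
    rw [hPdef]
    infer_instance
  obtain ⟨M⟩ := hnetriv
  have hMle : Fintype.card (Fin k) ≤ Fintype.card {x : P // x ∈ M} := by
    rw [Fintype.card_fin, ← Nat.card_eq_fintype_card]
    have := hpc M
    rw [Configuration.pointCount] at this
    omega
  obtain ⟨emb⟩ := Function.Embedding.nonempty_iff_card_le.mpr hMle
  set pt : Fin k → P := fun i => (emb i).1 with hpt
  have hptM : ∀ i, pt i ∈ M := fun i => (emb i).2
  have hptinj : Function.Injective pt := fun i j h => emb.injective (Subtype.ext h)
  -- The digraph
  refine ⟨P ⊕ Fin k, inferInstance, by rw [Fintype.card_sum, hPcard, Fintype.card_fin], ?_⟩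
  set B : P ⊕ Fin k → P ⊕ Fin k → Prop := fun x z =>
    match x, z with
    | .inl x, .inl v => x ∈ σ v ∧ x ≠ v
    | .inr i, .inl v => pt i ∈ σ v ∧ (σ v = M → i = 0)
    | .inl x, .inr i => i ≠ 0 ∧ x ∈ M
    | .inr j, .inr i => i = 0 ∧ j ≠ 0
    with hB
  have hside : ∀ (x v : P), x ∈ σ v →
      ((Sum.inl x : P ⊕ Fin k) = Sum.inl v ∨ B (Sum.inl x) (Sum.inl v)) := by
    intro x v hx
    by_cases h : x = v
    · exact Or.inl (by rw [h])
    · exact Or.inr ⟨hx, h⟩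
  refine ⟨B, ?_, ?_, ?_⟩
  · -- Irreflexive
    rintro (x | i) h
    · exact h.2 rfl
    · exact h.2 h.1
  · -- Mediated
    have hmixed : ∀ (x : P) (i : Fin k), ∃ z : P ⊕ Fin k,
        ((Sum.inl x : P ⊕ Fin k) = z ∨ B (Sum.inl x) z) ∧
        ((Sum.inr i : P ⊕ Fin k) = z ∨ B (Sum.inr i) z) := by
      intro x i
      by_cases hi : i = 0
      · subst hi
        by_cases hx : x = pt 0
        · have hpos : 0 < Nat.card {l : P // x ∈ l} := by
            have := hlc x
            rw [Configuration.lineCount] at this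
            omega
          obtain ⟨⟨l, hl⟩, -⟩ := Nat.card_pos_iff.mp hpos
          obtain ⟨v, hv⟩ := hσsurj l
          refine ⟨Sum.inl v, hside x v (hv.symm ▸ hl), Or.inr ⟨?_, fun _ => rfl⟩⟩
          rw [hv, ← hx]
          exact hl
        · have hne : pt 0 ≠ x := fun h => hx h.symm
          obtain ⟨h1, h2⟩ := Configuration.HasLines.mkLine_ax (P := P) (L := P) hne
          obtain ⟨v, hv⟩ := hσsurj (Configuration.HasLines.mkLine hne)
          exact ⟨Sum.inl v, hside x v (hv.symm ▸ h2),
            Or.inr ⟨hv.symm ▸ h1, fun _ => rfl⟩⟩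
      · by_cases hx : x ∈ M
        · exact ⟨Sum.inr i, Or.inr ⟨hi, hx⟩, Or.inl rfl⟩
        · have hne : pt i ≠ x := fun h => hx (h ▸ hptM i)
          obtain ⟨h1, h2⟩ := Configuration.HasLines.mkLine_ax (P := P) (L := P) hne
          have hlM : Configuration.HasLines.mkLine hne ≠ M := fun h => hx (h ▸ h2)
          obtain ⟨v, hv⟩ := hσsurj (Configuration.HasLines.mkLine hne)
          exact ⟨Sum.inl v, hside x v (hv.symm ▸ h2),
            Or.inr ⟨hv.symm ▸ h1, fun hM => absurd (hv.symm.trans hM).symm (Ne.symm hlM)⟩⟩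
    rintro (x | i) (y | j) hxy
    · have hne : x ≠ y := fun h => hxy (congrArg Sum.inl h)
      obtain ⟨h1, h2⟩ := Configuration.HasLines.mkLine_ax (P := P) (L := P) hne
      obtain ⟨v, hv⟩ := hσsurj (Configuration.HasLines.mkLine hne)
      exact ⟨Sum.inl v, hside x v (hv.symm ▸ h1), hside y v (hv.symm ▸ h2)⟩
    · exact hmixed x j
    · obtain ⟨z, h1, h2⟩ := hmixed y i
      exact ⟨z, h2, h1⟩
    · refine ⟨Sum.inr 0, ?_, ?_⟩
      · by_cases h : i = 0
        · exact Or.inl (by rw [h])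
        · exact Or.inr ⟨rfl, h⟩
      · by_cases h : j = 0
        · exact Or.inl (by rw [h])
        · exact Or.inr ⟨rfl, h⟩
  · -- in-degrees
    intro z
    have hsplit : Nat.card {x : P ⊕ Fin k // B x z} =
        Nat.card {a : P // B (Sum.inl a) z} + Nat.card {b : Fin k // B (Sum.inr b) z} := by
      rw [Nat.card_congr (Equiv.subtypeSum), Nat.card_sum]
    rw [hsplit]
    cases z with
    | inl v =>
      have hA : Nat.card {a : P // B (Sum.inl a) (Sum.inl v)} ≤ q := by
        have : Nat.card {a : P // B (Sum.inl a) (Sum.inl v)}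
            = #(Finset.univ.filter (fun a : P => a ∈ σ v ∧ a ≠ v)) := by
          rw [Nat.card_eq_fintype_card, Fintype.card_subtype]
        rw [this]
        have hsub : Finset.univ.filter (fun a : P => a ∈ σ v ∧ a ≠ v)
            ⊆ (Finset.univ.filter (fun a : P => a ∈ σ v)).erase v := by
          intro a ha
          simp only [Finset.mem_filter, Finset.mem_univ, true_and] at ha
          exact Finset.mem_erase.mpr ⟨ha.2, by simp [ha.1]⟩
        calc #(Finset.univ.filter (fun a : P => a ∈ σ v ∧ a ≠ v))
            ≤ #((Finset.univ.filter (fun a : P => a ∈ σ v)).erase v) :=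
              Finset.card_le_card hsub
          _ = #(Finset.univ.filter (fun a : P => a ∈ σ v)) - 1 :=
              Finset.card_erase_of_mem (by simp [hσmem' v])
          _ ≤ q := by rw [hptfin (σ v)]; omega
        -- (the `rw` reduces the goal to `q + 1 - 1 ≤ q`)
      have hBc : Nat.card {b : Fin k // B (Sum.inr b) (Sum.inl v)} ≤ 1 := by
        rw [Nat.card_eq_fintype_card]
        refine Fintype.card_le_one_iff_subsingleton.mpr ?_
        constructor
        rintro ⟨i, hi1, hi2⟩ ⟨j, hj1, hj2⟩
        refine Subtype.ext ?_
        show i = j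
        by_cases hM : σ v = M
        · rw [hi2 hM, hj2 hM]
        · rcases Configuration.Nondegenerate.eq_or_eq (hptM i) (hptM j) hi1 hj1 with h | h
          · exact hptinj h
          · exact absurd h.symm hM
      omega
    | inr i =>
      by_cases hi : i = 0
      · subst hi
        have hA : Nat.card {a : P // B (Sum.inl a) (Sum.inr (0 : Fin k))} = 0 := by
          haveI : IsEmpty {a : P // B (Sum.inl a) (Sum.inr (0 : Fin k))} :=
            ⟨fun ⟨a, h⟩ => h.1 rfl⟩
          exact Nat.card_of_isEmpty
        have hBc : Nat.card {b : Fin k // B (Sum.inr b) (Sum.inr (0 : Fin k))} ≤ k := by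
          have h1 : Nat.card {b : Fin k // B (Sum.inr b) (Sum.inr (0 : Fin k))}
              ≤ Nat.card (Fin k) :=
            Nat.card_le_card_of_injective Subtype.val Subtype.val_injective
          have h2 : Nat.card (Fin k) = k := by rw [Nat.card_eq_fintype_card, Fintype.card_fin]
          omega
        omega
      · have hA : Nat.card {a : P // B (Sum.inl a) (Sum.inr i)} ≤ q + 1 := by
          have h1 : Nat.card {a : P // B (Sum.inl a) (Sum.inr i)}
              ≤ Nat.card {a : P // a ∈ M} := by
            refine Nat.card_le_card_of_injective
              (fun x => ⟨x.1, x.2.2⟩) ?_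
            rintro ⟨a, ha⟩ ⟨b, hb⟩ h
            exact Subtype.ext congr(($h).1)
          have h2 : Nat.card {a : P // a ∈ M} = q + 1 := hpc M
          omega
        have hBc : Nat.card {b : Fin k // B (Sum.inr b) (Sum.inr i)} = 0 := by
          haveI : IsEmpty {b : Fin k // B (Sum.inr b) (Sum.inr i)} :=
            ⟨fun ⟨b, h⟩ => hi h.1⟩
          exact Nat.card_of_isEmpty
        omega

/-- Let `q` be a prime power and `s` an integer with `q² + q + 2 ≤ s ≤ q² + 2q + 2`.
Then `μ(s) = f(s) = q + 1`. -/
theorem mu_eq_f_interval (q s : ℕ) (hq : IsPrimePow q)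
    (hs1 : q ^ 2 + q + 2 ≤ s) (hs2 : s ≤ q ^ 2 + 2 * q + 2) :
    mu s = q + 1 ∧ f s = q + 1 := by
  have hq2 : 2 ≤ q := hq.two_le
  have hf : f s = q + 1 := by
    have hs1' : (q : ℝ) ^ 2 + q + 2 ≤ (s : ℝ) := by exact_mod_cast hs1
    have hs2' : (s : ℝ) ≤ (q : ℝ) ^ 2 + 2 * q + 2 := by exact_mod_cast hs2
    rw [f, Nat.ceil_eq_iff (by omega)]
    constructor
    · have h1 : ((2 * (q : ℝ) + 1)) ^ 2 < 4 * (s : ℝ) - 3 := by nlinarith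
      have h2 : (2 * (q : ℝ) + 1) < Real.sqrt (4 * (s : ℝ) - 3) :=
        (Real.lt_sqrt (by positivity)).mpr h1
      have h3 : ((q + 1 - 1 : ℕ) : ℝ) = (q : ℝ) := by
        simp
      rw [h3]
      linarith
    · have h1 : Real.sqrt (4 * (s : ℝ) - 3) ≤ 2 * (q : ℝ) + 3 := by
        have h0 : (4 * (s : ℝ) - 3) ≤ (2 * (q : ℝ) + 3) ^ 2 := by nlinarith
        calc Real.sqrt (4 * (s : ℝ) - 3) ≤ Real.sqrt ((2 * (q : ℝ) + 3) ^ 2) :=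
              Real.sqrt_le_sqrt h0
        _ = 2 * (q : ℝ) + 3 := Real.sqrt_sq (by positivity)
      push_cast
      linarith
  refine ⟨?_, hf⟩
  obtain ⟨p, n, hp, hn, hpq⟩ := hq
  haveI : Fact p.Prime := ⟨hp.nat_prime⟩
  haveI : Fintype (GaloisField p n) := Fintype.ofFinite _
  have hK : Fintype.card (GaloisField p n) = q := by
    rw [← Nat.card_eq_fintype_card, GaloisField.card p n (by omega), hpq]
  have hk1 : 1 ≤ s - (q ^ 2 + q + 1) := by omega
  have hk2 : s - (q ^ 2 + q + 1) ≤ q + 1 := by omega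
  obtain ⟨V, hVfin, hVcard, B, hirr, hmed, hdeg⟩ :=
    exists_construction q (s - (q ^ 2 + q + 1)) hq2 (GaloisField p n) hK hk1 hk2
  haveI := hVfin
  have hVcard' : Fintype.card V = q ^ 2 + q + 1 + (s - (q ^ 2 + q + 1)) := by
    have := Subsingleton.elim (α := Fintype V) ‹Fintype V› hVfin
    rw [this]
    exact hVcard
  have he : Fintype.card (Fin s) = Fintype.card V := by
    rw [Fintype.card_fin, hVcard']
    omega
  obtain ⟨A, hA1, hA2, hA3⟩ :=
    exists_mediated_of_equiv (Fintype.equivOfCardEq he) B hirr hmed hdeg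
  have hge : ∀ A' : Fin s → Fin s → Prop, Mediated A' → q + 1 ≤ maxInDeg A' := by
    intro A' hA'
    have h := mediated_lower (show 0 < s by omega) A' hA'
    by_contra hlt
    push_neg at hlt
    have h1 : (maxInDeg A' + 1) * maxInDeg A' ≤ (q + 1) * q :=
      Nat.mul_le_mul (by omega) (by omega)
    have h2 : (q + 1) * q = q ^ 2 + q := by ring
    rw [h2] at h1
    omega
  have hmem : (q + 1) ∈ {d : ℕ |
      ∃ A : Fin s → Fin s → Prop, Irreflexive A ∧ Mediated A ∧ maxInDeg A = d} :=
    ⟨A, hA1, hA2, le_antisymm hA3 (hge A hA2)⟩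
  refine le_antisymm (Nat.sInf_le hmem) (le_csInf ⟨q + 1, hmem⟩ ?_)
  rintro d ⟨A', _, h2, rfl⟩
  exact hge A' h2
end

section
/- If there exists a cyclic n-difference cover D = {d₁,…,d_k} of cardinality k, then μ(n) ≤ k − 1; that is, there exists a mediated digraph on n vertices whose maximum in-degree is at most k − 1. -/
/-! Translating `D` so that one of its elements `d₀` sits at `0`, the digraph on `ℤ_n` with an
arc `x → z` whenever `x - z ∈ (D - d₀) \ {0}` is a Cayley digraph: every in-degree is `|D| - 1`.
It is mediated because `x - y = a - b` with `a, b ∈ D` gives the common out-neighbour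
`z = x - a + d₀ = y - b + d₀` of `x` and `y`. -/

theorem mu_le_maxInDeg {n : ℕ} {A : Fin n → Fin n → Prop} (hirr : Irreflexive A)
    (hmed : Mediated A) : mu n ≤ maxInDeg A :=
  Nat.sInf_le ⟨A, hirr, hmed, rfl⟩

section CayleyDigraph

variable {G : Type*} [AddCommGroup G] [DecidableEq G] {n : ℕ}
  (e : Fin n ≃ G) (D : Finset G) (d₀ : G)

def cayleyArc (x z : Fin n) : Prop :=
  e x - e z + d₀ ∈ D.erase d₀

theorem irreflexive_cayleyArc : Irreflexive (cayleyArc e D d₀) := fun x h => by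
  simp [cayleyArc] at h

variable {D d₀}

theorem eq_or_cayleyArc_iff (hd₀ : d₀ ∈ D) (x z : Fin n) :
    x = z ∨ cayleyArc e D d₀ x z ↔ e x - e z + d₀ ∈ D := by
  by_cases hxz : x = z
  · simp [hxz, hd₀]
  · have : e x - e z + d₀ ≠ d₀ := by simpa [sub_eq_zero] using hxz
    simp [cayleyArc, hxz, this]

theorem mediated_cayleyArc (hd₀ : d₀ ∈ D) (hcover : ∀ g : G, ∃ a ∈ D, ∃ b ∈ D, a - b = g) :
    Mediated (cayleyArc e D d₀) := by
  intro x y _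
  obtain ⟨a, ha, b, hb, hab⟩ := hcover (e x - e y)
  refine ⟨e.symm (e x - a + d₀), ?_, ?_⟩ <;>
    rw [eq_or_cayleyArc_iff e hd₀, Equiv.apply_symm_apply]
  · convert ha using 1; abel
  · convert hb using 1
    calc e y - (e x - a + d₀) + d₀ = a - (e x - e y) := by abel
      _ = b := by rw [← hab, sub_sub_cancel]

theorem inDeg_cayleyArc (z : Fin n) : inDeg (cayleyArc e D d₀) z = (D.erase d₀).card := by
  rw [inDeg, ← Nat.card_eq_finsetCard]
  refine Nat.card_congr ((e.trans (Equiv.addRight (d₀ - e z))).subtypeEquiv fun x => ?_)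
  simp only [cayleyArc, Equiv.trans_apply, Equiv.coe_addRight]
  congr! 1
  abel

theorem maxInDeg_cayleyArc_le (hd₀ : d₀ ∈ D) : maxInDeg (cayleyArc e D d₀) ≤ D.card - 1 :=
  Finset.sup_le fun z _ => ((inDeg_cayleyArc e z).trans (Finset.card_erase_of_mem hd₀)).le

end CayleyDigraph

/-- If there exists a cyclic `n`-difference cover `D ⊆ ℤ_n` of cardinality `k`
(i.e. every element of `ℤ_n` is a difference of two elements of `D`), then
`μ(n) ≤ k − 1`; that is, there is a mediated digraph on `n` vertices whose
maximum in-degree is at most `k − 1`. -/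
theorem mu_le_of_difference_cover (n k : ℕ) (hn : 0 < n) (D : Finset (ZMod n))
    (hcard : D.card = k)
    (hcover : ∀ z : ZMod n, ∃ a ∈ D, ∃ b ∈ D, a - b = z) :
    mu n ≤ k - 1 ∧
    ∃ A : Fin n → Fin n → Prop,
      Irreflexive A ∧ Mediated A ∧ maxInDeg A ≤ k - 1 := by
  have : NeZero n := ⟨hn.ne'⟩
  obtain ⟨d₀, hd₀, -⟩ := hcover 0
  let e : Fin n ≃ ZMod n := (ZMod.finEquiv n).toEquiv
  have hirr := irreflexive_cayleyArc e D d₀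
  have hmed := mediated_cayleyArc e hd₀ hcover
  have hmax : maxInDeg (cayleyArc e D d₀) ≤ k - 1 := hcard ▸ maxInDeg_cayleyArc_le e hd₀
  exact ⟨(mu_le_maxInDeg hirr hmed).trans hmax, cayleyArc e D d₀, hirr, hmed, hmax⟩
end

section
/- There are infinitely many positive integers q for which there is no projective plane of order q. -/
/-- `B` is a projective plane of order `q`: a symmetric `(q²+q+1, q+1, 1)`-design,
i.e. `q²+q+1` blocks on `q²+q+1` points, each block of size `q+1`, and every pair
of distinct points contained in exactly one block. -/
def IsProjectivePlane (q : ℕ) (B : Fin (q^2+q+1) → Finset (Fin (q^2+q+1))) : Prop :=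
  (∀ i, (B i).card = q + 1) ∧
  ∀ x y : Fin (q^2+q+1), x ≠ y →
    (Finset.univ.filter fun i => x ∈ B i ∧ y ∈ B i).card = 1

/-- There exists a projective plane of order `q`. -/
def ExistsProjectivePlane (q : ℕ) : Prop := ∃ B, IsProjectivePlane q B

open Finset


lemma dvd_of_dvd_sq_add_sq {p x y : ℕ} (hp : p.Prime) (h3 : p % 4 = 3)
    (h : p ∣ x^2 + y^2) : p ∣ x ∧ p ∣ y := by
  haveI : Fact p.Prime := ⟨hp⟩
  have hx : ((x^2 + y^2 : ℕ) : ZMod p) = 0 := (ZMod.natCast_eq_zero_iff _ _).2 h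
  push_cast at hx
  have hy0 : (y : ZMod p) = 0 := by
    by_contra hy
    have hu : (y : ZMod p) * (y : ZMod p)⁻¹ = 1 := mul_inv_cancel₀ hy
    have hsq : ((x : ZMod p) * (y : ZMod p)⁻¹)^2 = -1 := by
      linear_combination ((y:ZMod p)⁻¹)^2 * hx - (1 + (y:ZMod p)*(y:ZMod p)⁻¹) * hu
    have : IsSquare (-1 : ZMod p) := ⟨(x : ZMod p) * (y : ZMod p)⁻¹, by rw [← hsq]; ring⟩
    rw [ZMod.exists_sq_eq_neg_one_iff] at this
    exact this h3
  have hx0 : (x : ZMod p) = 0 := by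
    have h2 : (x : ZMod p)^2 = 0 := by rw [hy0] at hx; linear_combination hx
    exact pow_eq_zero_iff (n := 2) (by norm_num) |>.1 h2
  exact ⟨(ZMod.natCast_eq_zero_iff _ _).1 hx0,
    (ZMod.natCast_eq_zero_iff _ _).1 hy0⟩

lemma even_factorization_of_sq_add_sq {p : ℕ} (hp : p.Prime) (h3 : p % 4 = 3) :
    ∀ n, n ≠ 0 → ∀ x y : ℕ, n = x^2 + y^2 → Even (n.factorization p) := by
  intro n
  induction n using Nat.strong_induction_on with
  | _ n ih =>
    intro hn x y hxy
    by_cases hd : p ∣ n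
    · obtain ⟨hx, hy⟩ := dvd_of_dvd_sq_add_sq hp h3 (hxy ▸ hd)
      obtain ⟨x', rfl⟩ := hx
      obtain ⟨y', rfl⟩ := hy
      have hn' : n = p^2 * (x'^2 + y'^2) := by rw [hxy]; ring
      have hne : x'^2 + y'^2 ≠ 0 := by
        intro h0; rw [h0, mul_zero] at hn'; exact hn hn'
      have hp1 : 1 < p := hp.one_lt
      have hlt : x'^2 + y'^2 < n := by
        rw [hn']
        have h4 : 4 ≤ p^2 := by nlinarith
        have := Nat.pos_of_ne_zero hne
        nlinarith
      obtain ⟨r, hr⟩ := ih _ hlt hne x' y' rfl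
      rw [hn', Nat.factorization_mul (by positivity) hne, hp.factorization_pow]
      simp only [Finsupp.coe_add, Pi.add_apply, Finsupp.single_eq_same, hr]
      exact ⟨r + 1, by omega⟩
    · rw [Nat.factorization_eq_zero_of_not_dvd hd]; exact Even.zero

lemma mod_four_eq_one_of_all_even :
    ∀ u, Odd u → (∀ p, p.Prime → p % 4 = 3 → Even (u.factorization p)) → u % 4 = 1 := by
  intro u
  induction u using Nat.strong_induction_on with
  | _ u ih =>
    intro hu hfac
    have hu0 : u ≠ 0 := fun h => by simp [h, Nat.odd_iff] at hu
    rcases eq_or_lt_of_le (Nat.one_le_iff_ne_zero.2 hu0) with h1 | h1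
    · omega
    · -- u > 1 : peel off the minimal prime power
      set p := u.minFac with hpdef
      have hp : p.Prime := Nat.minFac_prime (by omega)
      have hpu : p ∣ u := Nat.minFac_dvd u
      set k := u.factorization p with hk
      set u' := u / p ^ k with hu'
      have hfact : p ^ k * u' = u := Nat.ordProj_mul_ordCompl_eq_self u p
      have hpu' : ¬ p ∣ u' := Nat.not_dvd_ordCompl hp hu0
      have hu'0 : u' ≠ 0 := by intro h; rw [h, mul_zero] at hfact; exact hu0 hfact.symm
      have hk1 : 1 ≤ k := (Nat.Prime.factorization_pos_of_dvd hp hu0 hpu)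
      have hppow : 1 < p ^ k := Nat.one_lt_pow (by omega) hp.one_lt
      have hlt : u' < u := by
        rw [← hfact]
        calc u' = 1 * u' := (one_mul u').symm
        _ < p ^ k * u' := Nat.mul_lt_mul_of_lt_of_le hppow le_rfl (Nat.pos_of_ne_zero hu'0)
      have hodd : Odd u' := by
        by_contra h
        rw [Nat.not_odd_iff_even] at h
        obtain ⟨t, ht⟩ := h
        exact (Nat.not_even_iff_odd.2 hu) ⟨p ^ k * t, by rw [← hfact, ht]; ring⟩
      have hfac' : ∀ r, r.Prime → r % 4 = 3 → Even (u'.factorization r) := by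
        intro r hr hr3
        by_cases hrp : r = p
        · subst hrp
          rw [Nat.factorization_eq_zero_of_not_dvd hpu']
          exact Even.zero
        · have heq : u.factorization r = (p ^ k).factorization r + u'.factorization r := by
            conv_lhs => rw [← hfact]
            rw [Nat.factorization_mul (by positivity) hu'0]; rfl
          rw [hp.factorization_pow] at heq
          have h0 : (Finsupp.single p k) r = 0 := Finsupp.single_eq_of_ne' (fun h => hrp h.symm)
          rw [h0, zero_add] at heq
          rw [← heq]
          exact hfac r hr hr3
      have ih' := ih u' hlt hodd hfac'
      have hpodd : p % 2 = 1 := by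
        rcases (Nat.Prime.eq_two_or_odd hp) with h2 | h2
        · exfalso
          rw [h2] at hpu
          obtain ⟨t, ht⟩ := hpu
          exact (Nat.not_even_iff_odd.2 hu) ⟨t, by omega⟩
        · exact h2
      have hp4 : p % 4 = 1 ∨ p % 4 = 3 := by omega
      have hpk : p ^ k % 4 = 1 := by
        rcases hp4 with h4 | h4
        · rw [Nat.pow_mod, h4, one_pow]; rfl
        · have hke : Even k := hfac p hp h4
          obtain ⟨j, hj⟩ := hke
          have hpk2 : p ^ k = (p ^ 2) ^ j := by rw [← pow_mul]; congr 1; omega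
          rw [hpk2, Nat.pow_mod, Nat.pow_mod p, h4]
          norm_num [Nat.pow_mod]
      rw [← hfact, Nat.mul_mod, hpk, ih']

lemma exists_bad_prime {q : ℕ} (h : q % 8 = 6) :
    ∃ p, p.Prime ∧ p % 4 = 3 ∧ Odd (q.factorization p) := by
  obtain ⟨u, hu⟩ : ∃ u, q = 2 * u := ⟨q / 2, by omega⟩
  have hu4 : u % 4 = 3 := by omega
  have huodd : Odd u := by rw [Nat.odd_iff]; omega
  have hu0 : u ≠ 0 := by omega
  by_contra hcon
  push_neg at hcon
  have hall : ∀ p, p.Prime → p % 4 = 3 → Even (u.factorization p) := by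
    intro p hp hp3
    have hq : q.factorization p = u.factorization p := by
      rw [hu, Nat.factorization_mul (by norm_num) hu0]
      have h2 : (2:ℕ).factorization p = 0 :=
        Nat.factorization_eq_zero_of_not_dvd (by
          intro hd
          have := Nat.le_of_dvd (by norm_num) hd
          interval_cases p <;> omega)
      simp [h2]
    have := hcon p hp hp3
    rw [Nat.not_odd_iff_even] at this
    rwa [hq] at this
  have := mod_four_eq_one_of_all_even u huodd hall
  omega

lemma no_rat_sol {q : ℕ} (h : q % 8 = 6) : ¬ ∃ a b : ℚ, (q : ℚ) * a^2 = 1 + b^2 := by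
  rintro ⟨a, b, hab⟩
  have ha0 : a ≠ 0 := by
    intro h0
    rw [h0] at hab
    nlinarith [sq_nonneg b]
  set D : ℤ := (a.den : ℤ) * (b.den : ℤ) with hD
  set A : ℤ := a.num * (b.den : ℤ) with hA
  set Bn : ℤ := b.num * (a.den : ℤ) with hBn
  have haA : (A : ℚ) = a * (D : ℚ) := by
    push_cast [hA, hD]
    rw [show a * ((a.den:ℚ) * (b.den:ℚ)) = (a * (a.den:ℚ)) * (b.den:ℚ) by ring,
      Rat.mul_den_eq_num]
  have haB : (Bn : ℚ) = b * (D : ℚ) := by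
    push_cast [hBn, hD]
    rw [show b * ((a.den:ℚ) * (b.den:ℚ)) = (b * (b.den:ℚ)) * (a.den:ℚ) by ring,
      Rat.mul_den_eq_num]
  have key : ((q * A^2 : ℤ) : ℚ) = ((D^2 + Bn^2 : ℤ) : ℚ) := by
    push_cast
    rw [haA, haB]
    push_cast
    linear_combination (D:ℚ)^2 * hab
  have keyInt : q * A^2 = D^2 + Bn^2 := by exact_mod_cast key
  have hA0 : A ≠ 0 := by
    simp only [hA, mul_ne_zero_iff]
    exact ⟨Rat.num_ne_zero.2 ha0, Int.natCast_ne_zero.2 b.den_nz⟩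
  -- to naturals
  have hnat : q * A.natAbs^2 = D.natAbs^2 + Bn.natAbs^2 := by
    have h1 : (q * A^2).natAbs = q * A.natAbs^2 := by
      rw [Int.natAbs_mul, Int.natAbs_pow]
      simp
    have h2 : (D^2 + Bn^2).natAbs = D.natAbs^2 + Bn.natAbs^2 := by
      rw [Int.natAbs_add_of_nonneg (sq_nonneg D) (sq_nonneg Bn), Int.natAbs_pow, Int.natAbs_pow]
    rw [← h1, ← h2, keyInt]
  obtain ⟨p, hp, hp3, hodd⟩ := exists_bad_prime h
  have hq0 : q ≠ 0 := by omega
  have ha'0 : A.natAbs ≠ 0 := fun hh => hA0 (Int.natAbs_eq_zero.1 hh)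
  have hN0 : q * A.natAbs^2 ≠ 0 := by positivity
  have heven := even_factorization_of_sq_add_sq hp hp3 _ hN0 _ _ hnat
  rw [Nat.factorization_mul hq0 (by positivity), Nat.factorization_pow] at heven
  simp only [Finsupp.coe_add, Pi.add_apply, Finsupp.smul_apply, smul_eq_mul] at heven
  obtain ⟨r, hr⟩ := heven
  obtain ⟨r', hr'⟩ := hodd
  omega

lemma br_elim (q : ℚ) : ∀ (m : ℕ) (L : Fin m → Fin (m+1) → ℚ) (μ ν : Fin (m+1) → ℚ),
    (∀ x : Fin (m+1) → ℚ,
      (∑ i, (∑ j, L i j * x j)^2) + q * (∑ j, μ j * x j)^2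
        = (∑ j, (x j)^2) + (∑ j, ν j * x j)^2) →
    ∃ a b : ℚ, q * a^2 = 1 + b^2 := by
  intro m
  induction m with
  | zero =>
    intro L μ ν h
    have h1 := h (fun _ => 1)
    simp [Fin.sum_univ_one] at h1
    exact ⟨μ 0, ν 0, h1⟩
  | succ m ih =>
    intro L μ ν h
    set c := L 0 0 with hc
    set t : Fin (m+1) → ℚ := fun j => L 0 j.succ with ht
    -- find d so that substituting x₀ := d ⬝ x' makes (L 0 ⬝ x)² = (d ⬝ x')²
    obtain ⟨d, hd⟩ : ∃ d : Fin (m+1) → ℚ, ∀ x' : Fin (m+1) → ℚ,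
        (c * (∑ j, d j * x' j) + ∑ j, t j * x' j)^2 = (∑ j, d j * x' j)^2 := by
      by_cases hc1 : c = 1
      · refine ⟨fun j => -(t j) / 2, fun x' => ?_⟩
        have hsum : (∑ j, -(t j)/2 * x' j) = (∑ j, t j * x' j) * (-(1/2)) := by
          rw [Finset.sum_mul]
          exact Finset.sum_congr rfl fun j _ => by ring
        rw [hsum, hc1]
        ring
      · refine ⟨fun j => t j / (1 - c), fun x' => ?_⟩
        have h1c : (1:ℚ) - c ≠ 0 := fun hh => hc1 (by linarith)
        have hsum : (∑ j, t j/(1-c) * x' j) = (∑ j, t j * x' j)/(1-c) := by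
          rw [Finset.sum_div]
          exact Finset.sum_congr rfl fun j _ => by ring
        rw [hsum]
        field_simp
        ring
    -- substitution
    set S : (Fin (m+1) → ℚ) → (Fin (m+2) → ℚ) :=
      fun x' => Fin.cons (∑ j, d j * x' j) x' with hS
    have dotS : ∀ (a : Fin (m+2) → ℚ) (x' : Fin (m+1) → ℚ),
        (∑ j, a j * S x' j) = ∑ j, (a 0 * d j + a j.succ) * x' j := by
      intro a x'
      rw [Fin.sum_univ_succ]
      simp only [hS, Fin.cons_zero, Fin.cons_succ]
      rw [Finset.mul_sum, ← Finset.sum_add_distrib]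
      exact Finset.sum_congr rfl fun j _ => by ring
    have sqS : ∀ x' : Fin (m+1) → ℚ,
        (∑ j, (S x' j)^2) = (∑ j, d j * x' j)^2 + ∑ j, (x' j)^2 := by
      intro x'
      rw [Fin.sum_univ_succ]
      simp only [hS, Fin.cons_zero, Fin.cons_succ]
    -- new data
    apply ih (fun i j => L i.succ 0 * d j + L i.succ j.succ)
      (fun j => μ 0 * d j + μ j.succ) (fun j => ν 0 * d j + ν j.succ)
    intro x'
    have h0 := h (S x')
    rw [Fin.sum_univ_succ (f := fun i => (∑ j, L i j * S x' j)^2)] at h0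
    have hL0 : (∑ j, L 0 j * S x' j)^2 = (∑ j, d j * x' j)^2 := by
      have e1 : (∑ j, L 0 j * S x' j) = c * (∑ j, d j * x' j) + ∑ j, t j * x' j := by
        rw [Fin.sum_univ_succ]
        simp only [hS, Fin.cons_zero, Fin.cons_succ, hc, ht]
      rw [e1, hd]
    rw [hL0, sqS x', dotS μ x', dotS ν x'] at h0
    have h0' : (∑ i : Fin m, (∑ j, L i.succ j * S x' j)^2)
        + q * (∑ j, (μ 0 * d j + μ j.succ) * x' j)^2
        = (∑ j, (x' j)^2) + (∑ j, (ν 0 * d j + ν j.succ) * x' j)^2 := by linarith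
    have hsum : (∑ i : Fin m, (∑ j, (L i.succ 0 * d j + L i.succ j.succ) * x' j)^2)
        = ∑ i : Fin m, (∑ j, L i.succ j * S x' j)^2 :=
      Finset.sum_congr rfl fun i _ => by rw [dotS (L i.succ) x']
    rw [hsum]
    exact h0'

lemma sq_expand {N N' : ℕ} (M : Fin N → Fin N' → ℚ) (v : Fin N' → ℚ) :
    ∑ i, (∑ j, M i j * v j)^2
      = ∑ j, ∑ k, (v j * v k) * (∑ i, M i j * M i k) := by
  have h1 : ∀ i : Fin N, (∑ j, M i j * v j)^2 = ∑ j, ∑ k, (v j * v k) * (M i j * M i k) := by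
    intro i
    rw [sq, Finset.sum_mul_sum]
    exact Finset.sum_congr rfl fun j _ => Finset.sum_congr rfl fun k _ => by ring
  rw [Finset.sum_congr rfl fun i _ => h1 i]
  rw [Finset.sum_comm]
  refine Finset.sum_congr rfl fun j _ => ?_
  rw [Finset.sum_comm]
  exact Finset.sum_congr rfl fun k _ => by rw [← Finset.mul_sum]

lemma replication_s11 {q : ℕ} {B : Fin (q^2+q+1) → Finset (Fin (q^2+q+1))}
    (hB : IsProjectivePlane q B) (hq : 0 < q) (x : Fin (q^2+q+1)) :
    (Finset.univ.filter fun i => x ∈ B i).card = q + 1 := by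
  have h1 : ∑ y ∈ Finset.univ.erase x,
      (Finset.univ.filter fun i => x ∈ B i ∧ y ∈ B i).card = q^2 + q := by
    rw [Finset.sum_congr rfl fun y hy => hB.2 x y (Ne.symm (Finset.mem_erase.1 hy).1)]
    rw [Finset.sum_const, smul_eq_mul, mul_one, Finset.card_erase_of_mem (Finset.mem_univ x)]
    simp [Finset.card_univ]
  have h2 : ∑ y ∈ Finset.univ.erase x,
      (Finset.univ.filter fun i => x ∈ B i ∧ y ∈ B i).card
      = (Finset.univ.filter fun i => x ∈ B i).card * q := by
    have hrw : ∀ y, (Finset.univ.filter fun i => x ∈ B i ∧ y ∈ B i).card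
        = ∑ i : Fin (q^2+q+1), if x ∈ B i ∧ y ∈ B i then 1 else 0 :=
      fun y => Finset.card_filter _ _
    rw [Finset.sum_congr rfl fun y _ => hrw y, Finset.sum_comm]
    have hin : ∀ i, (∑ y ∈ Finset.univ.erase x, if x ∈ B i ∧ y ∈ B i then 1 else 0)
        = if x ∈ B i then q else 0 := by
      intro i
      by_cases hx : x ∈ B i
      · simp only [hx, true_and, if_true]
        have hset : (Finset.univ.erase x).filter (fun y => y ∈ B i) = (B i).erase x := by
          ext y
          simp [Finset.mem_erase, and_comm]
        rw [← Finset.card_filter, hset, Finset.card_erase_of_mem hx, hB.1 i]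
        simp
      · simp [hx]
    rw [Finset.sum_congr rfl fun i _ => hin i, ← Finset.sum_filter, Finset.sum_const,
      smul_eq_mul]
  rw [h2] at h1
  have : (q+1) * q = q^2 + q := by ring
  exact Nat.eq_of_mul_eq_mul_right hq (by omega)

section Plane
variable {q : ℕ} {B : Fin (q^2+q+1) → Finset (Fin (q^2+q+1))}

noncomputable def Nt (B : Fin (q^2+q+1) → Finset (Fin (q^2+q+1)))
    (i j : Fin (q^2+q+1)) : ℚ := if j ∈ B i then 1 else 0

lemma gram (hB : IsProjectivePlane q B) (hq : 0 < q) (j k : Fin (q^2+q+1)) :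
    (∑ i, Nt B i j * Nt B i k) = if j = k then (q:ℚ)+1 else 1 := by
  by_cases hjk : j = k
  · subst hjk
    simp only [if_pos rfl, Nt]
    have : ∀ i, (if j ∈ B i then (1:ℚ) else 0) * (if j ∈ B i then 1 else 0)
        = if j ∈ B i then 1 else 0 := fun i => by by_cases h : j ∈ B i <;> simp [h]
    rw [Finset.sum_congr rfl fun i _ => this i, Finset.sum_boole, replication_s11 hB hq j]
    push_cast; ring
  · simp only [if_neg hjk, Nt]
    have : ∀ i, (if j ∈ B i then (1:ℚ) else 0) * (if k ∈ B i then 1 else 0)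
        = if j ∈ B i ∧ k ∈ B i then 1 else 0 := fun i => by
      by_cases h1 : j ∈ B i <;> by_cases h2 : k ∈ B i <;> simp [h1, h2]
    rw [Finset.sum_congr rfl fun i _ => this i, Finset.sum_boole, hB.2 j k hjk]
    norm_num

lemma design_id (hB : IsProjectivePlane q B) (hq : 0 < q) (v : Fin (q^2+q+1) → ℚ) :
    ∑ i, (∑ j, Nt B i j * v j)^2
      = q * (∑ j, (v j)^2) + (∑ j, v j)^2 := by
  rw [sq_expand]
  have step : ∀ j k : Fin (q^2+q+1), (v j * v k) * (∑ i, Nt B i j * Nt B i k)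
      = v j * v k + (if j = k then (v j * v k) * q else 0) := by
    intro j k
    rw [gram hB hq]
    by_cases hjk : j = k <;> simp [hjk] <;> ring
  rw [Finset.sum_congr rfl fun j _ => Finset.sum_congr rfl fun k _ => step j k]
  rw [Finset.sum_congr rfl fun j (_ : j ∈ Finset.univ) => Finset.sum_add_distrib,
    Finset.sum_add_distrib]
  have e1 : ∑ j : Fin (q^2+q+1), ∑ k : Fin (q^2+q+1), v j * v k = (∑ j, v j)^2 := by
    rw [← Finset.sum_mul_sum]
    ring
  have e2 : (∑ j : Fin (q^2+q+1), ∑ k : Fin (q^2+q+1), if j = k then (v j * v k) * q else 0)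
      = q * ∑ j, (v j)^2 := by
    have h3 : ∀ j : Fin (q^2+q+1), (∑ k : Fin (q^2+q+1), if j = k then (v j * v k) * q else 0)
        = (v j)^2 * q := by
      intro j
      rw [Finset.sum_ite_eq]
      simp [sq]
    rw [Finset.sum_congr rfl fun j _ => h3 j, ← Finset.sum_mul]
    ring
  rw [e1, e2]
  ring

end Plane

lemma H_exists (q : ℕ) : ∃ H : Fin 4 → Fin 4 → ℚ,
    (∀ s t, (∑ u, H s u * H t u) = if s = t then (q:ℚ) else 0) ∧
    (∀ s t, (∑ u, H u s * H u t) = if s = t then (q:ℚ) else 0) := by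
  obtain ⟨a, b, c, d, habcd⟩ := Nat.sum_four_squares q
  have hq : ((a:ℚ))^2 + (b:ℚ)^2 + (c:ℚ)^2 + (d:ℚ)^2 = (q:ℚ) := by exact_mod_cast habcd
  refine ⟨![![(a:ℚ), b, c, d], ![-b, a, -d, c], ![-c, d, a, -b], ![-d, -c, b, a]], ?_, ?_⟩ <;>
  · intro s t
    fin_cases s <;> fin_cases t <;>
      simp [Fin.sum_univ_four] <;>
      first
        | linear_combination hq
        | ring

section Block
variable {m' : ℕ} (H : Fin 4 → Fin 4 → ℚ) (q : ℚ)

def Kp (H : Fin 4 → Fin 4 → ℚ) (p r : Fin m' × Fin 4) : ℚ :=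
  if p.1 = r.1 then H p.2 r.2 else 0

lemma Kp_orth (hH : ∀ s t, (∑ u, H s u * H t u) = if s = t then q else 0)
    (p r : Fin m' × Fin 4) :
    (∑ w, Kp H p w * Kp H r w) = if p = r then q else 0 := by
  rw [Fintype.sum_prod_type]
  by_cases hpr : p.1 = r.1
  · have point : ∀ (i : Fin m') (s : Fin 4),
        Kp H p (i, s) * Kp H r (i, s) = if p.1 = i then H p.2 s * H r.2 s else 0 := by
      intro i s
      by_cases h : p.1 = i
      · have h2 : r.1 = i := hpr ▸ h
        simp [Kp, h, h2, hpr]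
      · have h2 : ¬ r.1 = i := fun hh => h (hpr.trans hh)
        simp [Kp, h, h2]
    rw [Finset.sum_congr rfl fun i _ => Finset.sum_congr rfl fun s _ => point i s]
    have pull : ∀ i : Fin m', (∑ s : Fin 4, if p.1 = i then H p.2 s * H r.2 s else 0)
        = if p.1 = i then (∑ s : Fin 4, H p.2 s * H r.2 s) else 0 := by
      intro i; split <;> simp
    rw [Finset.sum_congr rfl fun i _ => pull i, Finset.sum_ite_eq, if_pos (Finset.mem_univ _),
      hH]
    have : (p.2 = r.2) ↔ (p = r) := by
      simp [Prod.ext_iff, hpr]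
    exact if_congr this rfl rfl
  · have point : ∀ (i : Fin m') (s : Fin 4), Kp H p (i, s) * Kp H r (i, s) = 0 := by
      intro i s
      by_cases h : p.1 = i
      · have h2 : ¬ r.1 = i := fun hh => hpr (h.trans hh.symm)
        simp [Kp, h, h2, hpr]
      · simp [Kp, h]
    rw [Finset.sum_congr rfl fun i _ => Finset.sum_congr rfl fun s _ => point i s]
    have : ¬ p = r := fun h => hpr (by rw [h])
    simp [this]

lemma Kp_orth_col (hH : ∀ s t, (∑ u, H u s * H u t) = if s = t then q else 0)
    (p r : Fin m' × Fin 4) :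
    (∑ w, Kp H w p * Kp H w r) = if p = r then q else 0 := by
  rw [Fintype.sum_prod_type]
  by_cases hpr : p.1 = r.1
  · have point : ∀ (i : Fin m') (s : Fin 4),
        Kp H (i, s) p * Kp H (i, s) r = if i = p.1 then H s p.2 * H s r.2 else 0 := by
      intro i s
      by_cases h : i = p.1
      · have h2 : i = r.1 := h.trans hpr
        simp [Kp, h, h2, hpr]
      · have h2 : ¬ i = r.1 := fun hh => h (hh.trans hpr.symm)
        simp [Kp, h, h2]
    rw [Finset.sum_congr rfl fun i _ => Finset.sum_congr rfl fun s _ => point i s]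
    have pull : ∀ i : Fin m', (∑ s : Fin 4, if i = p.1 then H s p.2 * H s r.2 else 0)
        = if i = p.1 then (∑ s : Fin 4, H s p.2 * H s r.2) else 0 := by
      intro i; split <;> simp
    rw [Finset.sum_congr rfl fun i _ => pull i, Finset.sum_ite_eq', if_pos (Finset.mem_univ _),
      hH]
    have : (p.2 = r.2) ↔ (p = r) := by
      simp [Prod.ext_iff, hpr]
    exact if_congr this rfl rfl
  · have point : ∀ (i : Fin m') (s : Fin 4), Kp H (i, s) p * Kp H (i, s) r = 0 := by
      intro i s
      by_cases h : i = p.1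
      · have h2 : ¬ i = r.1 := fun hh => hpr ((h.symm.trans hh))
        simp [Kp, h, h2, hpr]
      · simp [Kp, h]
    rw [Finset.sum_congr rfl fun i _ => Finset.sum_congr rfl fun s _ => point i s]
    have : ¬ p = r := fun h => hpr (by rw [h])
    simp [this]

end Block

lemma no_plane {q : ℕ} (h8 : q % 8 = 6) :
    ¬ ∃ B : Fin (q^2+q+1) → Finset (Fin (q^2+q+1)), IsProjectivePlane q B := by
  rintro ⟨B, hB⟩
  have hq : 0 < q := by omega
  obtain ⟨k8, hk8⟩ : ∃ k, q = 8*k+6 := ⟨q/8, by omega⟩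
  obtain ⟨m', hm'⟩ : ∃ m', q^2+q+1+1 = m'*4 := ⟨16*k8^2+26*k8+11, by subst hk8; ring⟩
  obtain ⟨H, hHrow, hHcol⟩ := H_exists q
  set e : Fin (q^2+q+1+1) ≃ Fin m' × Fin 4 :=
    (finCongr hm').trans finProdFinEquiv.symm with he
  set K : Fin (q^2+q+1+1) → Fin (q^2+q+1+1) → ℚ := fun k l => Kp H (e k) (e l) with hK
  have Krow : ∀ k k', (∑ l, K k l * K k' l) = if k = k' then (q:ℚ) else 0 := by
    intro k k'
    have h1 := Kp_orth H (q:ℚ) hHrow (e k) (e k')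
    rw [← Equiv.sum_comp e (fun w => Kp H (e k) w * Kp H (e k') w)] at h1
    rw [hK]
    rw [h1]
    exact if_congr e.apply_eq_iff_eq rfl rfl
  have Kcol : ∀ k k', (∑ l, K l k * K l k') = if k = k' then (q:ℚ) else 0 := by
    intro k k'
    have h1 := Kp_orth_col H (q:ℚ) hHcol (e k) (e k')
    rw [← Equiv.sum_comp e (fun w => Kp H w (e k) * Kp H w (e k'))] at h1
    rw [hK]
    rw [h1]
    exact if_congr e.apply_eq_iff_eq rfl rfl
  have hq0 : (q:ℚ) ≠ 0 := Nat.cast_ne_zero.2 (by omega)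
  set A : Fin (q^2+q+1+1) → Fin (q^2+q+1+1) → ℚ := fun k l => (q:ℚ)⁻¹ * K l k with hA
  have hKA : ∀ k t, (∑ l, K k l * A l t) = if k = t then 1 else 0 := by
    intro k t
    have h1 : (∑ l, K k l * A l t) = (q:ℚ)⁻¹ * ∑ l, K k l * K t l := by
      rw [Finset.mul_sum]
      exact Finset.sum_congr rfl fun l _ => by rw [hA]; ring
    rw [h1, Krow]
    split <;> field_simp <;> simp
  set X : (Fin (q^2+q+1+1) → ℚ) → Fin (q^2+q+1+1) → ℚ := fun y k => ∑ l, A k l * y l with hX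
  have hKX : ∀ (y : Fin (q^2+q+1+1) → ℚ) k, (∑ l, K k l * X y l) = y k := by
    intro y k
    have e1 : ∀ l, K k l * X y l = ∑ t, K k l * A l t * y t := by
      intro l
      rw [hX, Finset.mul_sum]
      exact Finset.sum_congr rfl fun t _ => by ring
    rw [Finset.sum_congr rfl fun l _ => e1 l, Finset.sum_comm]
    have e2 : ∀ t, (∑ l, K k l * A l t * y t) = (if k = t then 1 else 0) * y t := by
      intro t
      rw [← Finset.sum_mul, hKA]
    rw [Finset.sum_congr rfl fun t _ => e2 t]
    simp
  have hqsum : ∀ x : Fin (q^2+q+1+1) → ℚ,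
      (∑ k, (∑ l, K k l * x l)^2) = q * ∑ l, (x l)^2 := by
    intro x
    rw [sq_expand]
    rw [Finset.sum_congr rfl fun j _ => Finset.sum_congr rfl fun k _ =>
      congrArg (x j * x k * ·) (Kcol j k)]
    have h3 : ∀ j, (∑ k, (x j * x k) * (if j = k then (q:ℚ) else 0)) = (x j)^2 * q := by
      intro j
      have h4 : ∀ k, (x j * x k) * (if j = k then (q:ℚ) else 0)
          = if j = k then (x j * x k * q) else 0 := fun k => by split <;> ring
      rw [Finset.sum_congr rfl fun k _ => h4 k, Finset.sum_ite_eq, if_pos (Finset.mem_univ _)]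
      ring
    rw [Finset.sum_congr rfl fun j _ => h3 j, ← Finset.sum_mul]
    ring
  set Lf : Fin (q^2+q+1) → Fin (q^2+q+1+1) → ℚ :=
    fun i l => ∑ j : Fin (q^2+q+1), Nt B i j * A j.castSucc l with hLf
  set μf : Fin (q^2+q+1+1) → ℚ := fun l => A (Fin.last (q^2+q+1)) l with hμf
  set νf : Fin (q^2+q+1+1) → ℚ := fun l => ∑ j : Fin (q^2+q+1), A j.castSucc l with hνf
  have main : ∀ y : Fin (q^2+q+1+1) → ℚ,
      (∑ i, (∑ l, Lf i l * y l)^2) + (q:ℚ) * (∑ l, μf l * y l)^2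
        = (∑ l, (y l)^2) + (∑ l, νf l * y l)^2 := by
    intro y
    have dot1 : ∀ i, (∑ l, Lf i l * y l) = ∑ j : Fin (q^2+q+1), Nt B i j * X y j.castSucc := by
      intro i
      calc ∑ l, Lf i l * y l
          = ∑ l, ∑ j : Fin (q^2+q+1), Nt B i j * A j.castSucc l * y l := by
            refine Finset.sum_congr rfl fun l _ => ?_
            rw [hLf, Finset.sum_mul]
        _ = ∑ j : Fin (q^2+q+1), ∑ l, Nt B i j * A j.castSucc l * y l := Finset.sum_comm
        _ = ∑ j : Fin (q^2+q+1), Nt B i j * X y j.castSucc := by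
            refine Finset.sum_congr rfl fun j _ => ?_
            rw [hX, Finset.mul_sum]
            exact Finset.sum_congr rfl fun l _ => by ring
    have dotμ : (∑ l, μf l * y l) = X y (Fin.last _) := by
      rw [hμf, hX]
    have dotν : (∑ l, νf l * y l) = ∑ j : Fin (q^2+q+1), X y j.castSucc := by
      calc ∑ l, νf l * y l
          = ∑ l, ∑ j : Fin (q^2+q+1), A j.castSucc l * y l := by
            refine Finset.sum_congr rfl fun l _ => ?_
            rw [hνf, Finset.sum_mul]
        _ = ∑ j : Fin (q^2+q+1), ∑ l, A j.castSucc l * y l := Finset.sum_comm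
        _ = ∑ j : Fin (q^2+q+1), X y j.castSucc := by
            refine Finset.sum_congr rfl fun j _ => ?_
            rw [hX]
    rw [Finset.sum_congr rfl fun i (_ : i ∈ Finset.univ) => congrArg (·^2) (dot1 i),
      dotμ, dotν]
    rw [design_id hB hq (fun j => X y j.castSucc)]
    have hy : (∑ l, (y l)^2) = q * ∑ k, (X y k)^2 := by
      calc ∑ l, (y l)^2
          = ∑ l, (∑ t, K l t * X y t)^2 :=
            Finset.sum_congr rfl fun l _ => by rw [hKX y l]
        _ = q * ∑ k, (X y k)^2 := hqsum _
    rw [hy, Fin.sum_univ_castSucc (f := fun k => (X y k)^2)]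
    ring
  obtain ⟨a, b, hab⟩ := br_elim (q:ℚ) (q^2+q+1) Lf μf νf main
  exact no_rat_sol h8 ⟨a, b, hab⟩


/-- There are infinitely many positive integers `q > 1` for which there is no
projective plane of order `q`. -/
theorem infinitely_many_no_projective_plane :
    {q : ℕ | 1 < q ∧ ¬ ExistsProjectivePlane q}.Infinite := by
  apply Set.infinite_of_injective_forall_mem (f := fun k : ℕ => 8*k+6)
  · intro a b hab
    simp only at hab
    omega
  · intro k
    exact ⟨by omega, no_plane (q := 8*k+6) (by omega)⟩
end

section
/- Let q ≥ 2 be an integer, let n = q² + q + 1, and let L = (L₁,…,Lₙ) be a family of n blocks on the point set [n] = {1,…,n} such that every pair of distinct points of [n] is contained in some block and every block has at most q + 1 points. Then |L_k| = q + 1 for every k, and |L_i ∩ L_j| = 1 for all 1 ≤ i < j ≤ n; in particular, L is a projective plane of order q. -/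
/-! Count ordered pairs of distinct points with multiplicity. The `n = q² + q + 1` blocks of size
at most `q + 1` contain at most `n (q + 1) q = n (n - 1)` such pairs, while covering needs at least
`n (n - 1)`; so every block has exactly `q + 1` points and every pair lies in exactly one block.
For blocks `L i ≠ L j` pick `p ∈ L i \ L j`: the `q + 1` blocks through `p` meet `L j` in at most
one point each, and every point of `L j` is joined to `p` by exactly one of them, so each of them,
`L i` included, meets `L j` in exactly one point. -/

open Finset Fintype

theorem card_offDiag_lt_of_card_lt {α : Type*} [DecidableEq α] {s : Finset α} {c : ℕ}
    (hc : 2 ≤ c) (hs : #s < c) : #s.offDiag < c * (c - 1) := by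
  rw [offDiag_card, ← Nat.mul_sub_one]
  calc #s * (#s - 1) ≤ #s * (c - 1) := Nat.mul_le_mul_left _ (by omega)
    _ < c * (c - 1) := Nat.mul_lt_mul_of_pos_right hs (by omega)

section BlockDesigns

variable {ι α : Type*} [Fintype ι] [Fintype α] [DecidableEq α] (L : ι → Finset α)

theorem sum_card_offDiag_eq_sum_card_blocks_containing_pair :
    ∑ k, #(L k).offDiag = ∑ p ∈ (univ : Finset α).offDiag, #{k | p.1 ∈ L k ∧ p.2 ∈ L k} := by
  refine Eq.trans ?_ (sum_card_bipartiteAbove_eq_sum_card_bipartiteBelow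
    (fun k (p : α × α) => p.1 ∈ L k ∧ p.2 ∈ L k))
  congr! with k
  ext p
  simp only [bipartiteAbove, mem_filter, mem_offDiag, mem_univ, true_and]
  tauto

theorem card_eq_and_card_blocks_containing_pair_eq_one {c : ℕ} (hc : 2 ≤ c)
    (hcov : ∀ x y : α, x ≠ y → ∃ k, x ∈ L k ∧ y ∈ L k)
    (hbound : ∀ k, #(L k) ≤ c)
    (hcount : card ι * (c * (c - 1)) ≤ card α * (card α - 1)) :
    (∀ k, #(L k) = c) ∧ ∀ x y : α, x ≠ y → #{k | x ∈ L k ∧ y ∈ L k} = 1 := by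
  have hblock : ∀ k ∈ (univ : Finset ι), #(L k).offDiag ≤ c * (c - 1) := fun k _ => by
    rw [offDiag_card, ← Nat.mul_sub_one]
    exact Nat.mul_le_mul (hbound k) (Nat.sub_le_sub_right (hbound k) 1)
  have hpair : ∀ p ∈ (univ : Finset α).offDiag, 1 ≤ #{k | p.1 ∈ L k ∧ p.2 ∈ L k} :=
    fun p hp => by
      obtain ⟨k, hk⟩ := hcov p.1 p.2 (mem_offDiag.mp hp).2.2
      exact card_pos.mpr ⟨k, mem_filter.mpr ⟨mem_univ _, hk⟩⟩
  have hpairs : ∑ _p ∈ (univ : Finset α).offDiag, 1 = card α * (card α - 1) := by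
    rw [sum_const, smul_eq_mul, mul_one, offDiag_card, card_univ, Nat.mul_sub_one]
  have hblocks_le : ∑ k, #(L k).offDiag ≤ card ι * (c * (c - 1)) := by
    simpa only [sum_const, card_univ, smul_eq_mul] using sum_le_sum hblock
  have hpairs_le : card α * (card α - 1) ≤ ∑ k, #(L k).offDiag := by
    rw [← hpairs, sum_card_offDiag_eq_sum_card_blocks_containing_pair]
    exact sum_le_sum hpair
  constructor
  · have hsum : ∑ k, #(L k).offDiag = ∑ _k : ι, c * (c - 1) := by
      rw [sum_const, card_univ, smul_eq_mul]; omega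
    intro k
    by_contra hk
    exact (card_offDiag_lt_of_card_lt hc (lt_of_le_of_ne (hbound k) hk)).ne
      ((sum_eq_sum_iff_of_le hblock).mp hsum k (mem_univ k))
  · have hsum : ∑ p ∈ (univ : Finset α).offDiag, #{k | p.1 ∈ L k ∧ p.2 ∈ L k} =
        ∑ _p ∈ (univ : Finset α).offDiag, 1 := by
      rw [← sum_card_offDiag_eq_sum_card_blocks_containing_pair, hpairs]; omega
    intro x y hxy
    exact ((sum_eq_sum_iff_of_le hpair).mp hsum.symm (x, y) (by simpa using hxy)).symm

end BlockDesigns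

section LinearSpaces

variable {ι α : Type*} [Fintype ι] [Fintype α] [DecidableEq α] {L : ι → Finset α}

omit [Fintype α] in
theorem card_inter_le_one_of_unique (hunique : ∀ x y : α, x ≠ y → #{k | x ∈ L k ∧ y ∈ L k} = 1)
    {i j : ι} (hij : i ≠ j) : #(L i ∩ L j) ≤ 1 := by
  refine card_le_one.mpr fun x hx y hy => by_contra fun hxy => ?_
  have : 1 < #{k | x ∈ L k ∧ y ∈ L k} :=
    one_lt_card.mpr ⟨i, by simp_all, j, by simp_all, hij⟩
  exact this.ne' (hunique x y hxy)

theorem card_blocks_containing_mul (hunique : ∀ x y : α, x ≠ y → #{k | x ∈ L k ∧ y ∈ L k} = 1)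
    {q : ℕ} (hsize : ∀ k, #(L k) = q + 1) (p : α) :
    #{k | p ∈ L k} * q = card α - 1 := by
  have h := card_mul_eq_card_mul (s := {k | p ∈ L k}) (t := univ.erase p)
    (fun k y => y ∈ L k) (m := q) (n := 1) ?_ ?_
  · simpa [card_erase_of_mem] using h
  · intro k hk
    have hpk : p ∈ L k := (mem_filter.mp hk).2
    have : (univ.erase p).bipartiteAbove (fun k y => y ∈ L k) k = (L k).erase p := by
      ext y
      simp [bipartiteAbove, and_comm]
    rw [this, card_erase_of_mem hpk, hsize, Nat.add_sub_cancel]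
  · intro y hy
    rw [bipartiteBelow, filter_filter]
    exact hunique p y (ne_of_mem_erase hy).symm

theorem card_inter_eq_one_of_unique (hunique : ∀ x y : α, x ≠ y → #{k | x ∈ L k ∧ y ∈ L k} = 1)
    {q : ℕ} (hq : 0 < q) (hsize : ∀ k, #(L k) = q + 1) (hα : card α = q ^ 2 + q + 1)
    {i j : ι} (hij : i ≠ j) : #(L i ∩ L j) = 1 := by
  obtain ⟨p, hpi, hpj⟩ : ∃ p ∈ L i, p ∉ L j := by
    obtain ⟨p, hpi, hp⟩ := exists_mem_notMem_of_card_lt_card (s := L i ∩ L j) (t := L i)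
      (by have := card_inter_le_one_of_unique hunique hij; rw [hsize]; omega)
    exact ⟨p, hpi, fun hpj => hp (mem_inter.mpr ⟨hpi, hpj⟩)⟩
  have hblocks : #{k | p ∈ L k} = q + 1 := by
    refine Nat.eq_of_mul_eq_mul_right hq ?_
    rw [card_blocks_containing_mul hunique hsize, hα]
    ring_nf; omega
  have hsum : ∑ k ∈ {k | p ∈ L k}, #(L k ∩ L j) = ∑ k ∈ {k | p ∈ L k}, 1 := by
    rw [sum_const, hblocks, smul_eq_mul, mul_one, ← hsize j, card_eq_sum_ones (L j)]
    convert sum_card_bipartiteAbove_eq_sum_card_bipartiteBelow (s := {k | p ∈ L k}) (t := L j)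
      (fun k y => y ∈ L k) using 2 with k _ y hy
    · congr 1
      ext x
      simp [bipartiteAbove, and_comm]
    · rw [bipartiteBelow, filter_filter]
      exact (hunique p y (ne_of_mem_of_not_mem hy hpj).symm).symm
  have hle : ∀ k ∈ ({k | p ∈ L k} : Finset ι), #(L k ∩ L j) ≤ 1 := fun k hk =>
    card_inter_le_one_of_unique hunique (by rintro rfl; exact hpj (mem_filter.mp hk).2)
  exact (sum_eq_sum_iff_of_le hle).mp hsum i (by simpa using hpi)

end LinearSpaces

/-- Let `q ≥ 2`, `n = q² + q + 1`, and let `L = (L₁,…,Lₙ)` be a family of `n`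
blocks on the point set `[n]` such that every pair of distinct points lies in
some block and every block has at most `q + 1` points. Then every block has
exactly `q + 1` points and any two distinct blocks meet in exactly one point;
in particular `L` is a projective plane of order `q`. -/
theorem two_covering_small_blocks_is_projective_plane (q : ℕ) (hq : 2 ≤ q)
    (L : Fin (q ^ 2 + q + 1) → Finset (Fin (q ^ 2 + q + 1)))
    (hcov : ∀ x y : Fin (q ^ 2 + q + 1), x ≠ y → ∃ k, x ∈ L k ∧ y ∈ L k)
    (hbound : ∀ k, (L k).card ≤ q + 1) :
    (∀ k, (L k).card = q + 1) ∧
    (∀ i j : Fin (q ^ 2 + q + 1), i ≠ j → (L i ∩ L j).card = 1) ∧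
    IsProjectivePlane q L := by
  have hcount : card (Fin (q ^ 2 + q + 1)) * ((q + 1) * (q + 1 - 1)) ≤
      card (Fin (q ^ 2 + q + 1)) * (card (Fin (q ^ 2 + q + 1)) - 1) := by
    simp only [Fintype.card_fin, Nat.add_sub_cancel]
    exact Nat.mul_le_mul_left _ (le_of_eq (by ring))
  obtain ⟨hsize, hunique⟩ :=
    card_eq_and_card_blocks_containing_pair_eq_one L (by omega) hcov hbound hcount
  exact ⟨hsize, fun i j hij =>
    card_inter_eq_one_of_unique hunique (by omega) hsize (Fintype.card_fin _) hij, hsize, hunique⟩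
end

section
/- There are infinitely many positive integers n for which μ(n) > f(n); that is, the set {n : μ(n) > f(n)} is infinite. -/
open Finset

lemma three_dvd_of_sq_add_sq (b c : ℤ) (h : (3:ℤ) ∣ b^2 + c^2) : (3:ℤ) ∣ b ∧ (3:ℤ) ∣ c := by
  have hb : ((b : ZMod 3)^2 + (c : ZMod 3)^2 = 0) := by
    have := (ZMod.intCast_zmod_eq_zero_iff_dvd (b^2+c^2) 3).2 h
    push_cast at this
    exact this
  have key : ∀ x y : ZMod 3, x^2 + y^2 = 0 → x = 0 ∧ y = 0 := by decide
  obtain ⟨h1, h2⟩ := key _ _ hb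
  exact ⟨(ZMod.intCast_zmod_eq_zero_iff_dvd b 3).1 h1,
    (ZMod.intCast_zmod_eq_zero_iff_dvd c 3).1 h2⟩



lemma no_int_sol (u : ℤ) (hu : ¬ (3:ℤ) ∣ u) :
    ∀ k : ℕ, ∀ a b c : ℤ, a.natAbs ≤ k → a ≠ 0 → 3 * u * a ^ 2 = b ^ 2 + c ^ 2 → False := by
  intro k
  induction k with
  | zero => intro a b c hk ha _; omega
  | succ k ih =>
    intro a b c hk ha h
    have h3 : (3:ℤ) ∣ b^2 + c^2 := ⟨u * a^2, by linarith⟩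
    obtain ⟨⟨b', rfl⟩, ⟨c', rfl⟩⟩ := three_dvd_of_sq_add_sq _ _ h3
    have h9 : 3 * u * a^2 = 9 * (b'^2 + c'^2) := by nlinarith [h]
    have h3a : (3:ℤ) ∣ a := by
      have hd : (3:ℤ) ∣ u * a^2 := ⟨b'^2+c'^2, by linarith⟩
      have hp : Prime (3:ℤ) := Int.prime_three
      rcases hp.dvd_mul.1 hd with h' | h'
      · exact absurd h' hu
      · exact hp.dvd_of_dvd_pow h'
    obtain ⟨a', rfl⟩ := h3a
    have ha' : a' ≠ 0 := by rintro rfl; simp at ha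
    have h' : 3 * u * a'^2 = b'^2 + c'^2 := by nlinarith [h9]
    have hlt : a'.natAbs ≤ k := by
      have h1 : ((3:ℤ) * a').natAbs = 3 * a'.natAbs := by simp [Int.natAbs_mul]
      have h2 : a'.natAbs ≥ 1 := Int.natAbs_pos.2 ha'
      omega
    exact ih a' b' c' hlt ha' h'



/-- The invariant for the Bruck–Ryser style variable elimination:
`m` linear forms plus `√q·g` squared sum equals sum of `m+1` squares plus `h` squared. -/
def SqId (q : ℚ) (m : ℕ) : Prop :=
  ∃ (F : Fin m → Fin (m+1) → ℚ) (g h : Fin (m+1) → ℚ),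
    ∀ y : Fin (m+1) → ℚ,
      (∑ i, (∑ j, F i j * y j)^2) + q * (∑ j, g j * y j)^2
        = (∑ j, (y j)^2) + (∑ j, h j * y j)^2

lemma sqId_step (q : ℚ) (m : ℕ) (H : SqId q (m+1)) : SqId q m := by
  obtain ⟨F, g, h, hid⟩ := H
  set c : ℚ := F (Fin.last m) (Fin.last (m+1)) with hc
  set D : Fin (m+1) → ℚ :=
    (if c = 1 then fun j => -(F (Fin.last m) j.castSucc)/2
     else fun j => F (Fin.last m) j.castSucc / (1 - c)) with hD
  -- substitution: y := snoc y' (∑ j, D j * y' j)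
  refine ⟨fun i j => F i.castSucc j.castSucc + F i.castSucc (Fin.last (m+1)) * D j,
    fun j => g j.castSucc + g (Fin.last (m+1)) * D j,
    fun j => h j.castSucc + h (Fin.last (m+1)) * D j, ?_⟩
  intro y'
  set t : ℚ := ∑ j, D j * y' j with ht
  set y : Fin (m+2) → ℚ := Fin.snoc y' t with hy
  have K2 : ∀ v : Fin (m+2) → ℚ,
      (∑ j, v j * y j) = ∑ j, (v j.castSucc + v (Fin.last (m+1)) * D j) * y' j := by
    intro v
    rw [Fin.sum_univ_castSucc]
    simp only [hy, Fin.snoc_castSucc, Fin.snoc_last]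
    rw [ht, Finset.mul_sum, ← Finset.sum_add_distrib]
    congr 1; ext j; ring
  have K1 : (∑ j, F (Fin.last m) j * y j)^2 = t^2 := by
    rw [Fin.sum_univ_castSucc]
    simp only [hy, Fin.snoc_castSucc, Fin.snoc_last, ← hc]
    by_cases h1 : c = 1
    · have : ∑ j, F (Fin.last m) j.castSucc * y' j = -2 * t := by
        rw [ht, Finset.mul_sum]
        refine Finset.sum_congr rfl fun j _ => ?_
        simp only [hD, if_pos h1]; ring
      rw [this, h1]; ring
    · have : ∑ j, F (Fin.last m) j.castSucc * y' j = (1 - c) * t := by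
        rw [ht, Finset.mul_sum]
        refine Finset.sum_congr rfl fun j _ => ?_
        simp only [hD, if_neg h1]
        have hne : (1:ℚ) - c ≠ 0 := sub_ne_zero.2 fun e => h1 e.symm
        field_simp
      rw [this]; ring
  have hidy := hid y
  rw [Fin.sum_univ_castSucc (f := fun i => (∑ j, F i j * y j)^2)] at hidy
  rw [Fin.sum_univ_castSucc (f := fun j => (y j)^2)] at hidy
  have hyl : y (Fin.last (m+1)) = t := by simp [hy]
  rw [K1, hyl] at hidy
  have hidy' : (∑ i : Fin m, (∑ j, F i.castSucc j * y j)^2) + q * (∑ j, g j * y j)^2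
      = (∑ j : Fin (m+1), (y j.castSucc)^2) + (∑ j, h j * y j)^2 := by linarith
  calc (∑ i : Fin m, (∑ j, (F i.castSucc j.castSucc + F i.castSucc (Fin.last (m+1)) * D j) * y' j)^2)
        + q * (∑ j, (g j.castSucc + g (Fin.last (m+1)) * D j) * y' j)^2
      = (∑ i : Fin m, (∑ j, F i.castSucc j * y j)^2) + q * (∑ j, g j * y j)^2 := by
        rw [← K2 g]
        congr 1
        exact Finset.sum_congr rfl fun i _ => by rw [← K2 (F i.castSucc)]
    _ = (∑ j : Fin (m+1), (y j.castSucc)^2) + (∑ j, h j * y j)^2 := hidy'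
    _ = (∑ j, (y' j)^2) + (∑ j, (h j.castSucc + h (Fin.last (m+1)) * D j) * y' j)^2 := by
        rw [← K2 h]
        congr 1
        refine Finset.sum_congr rfl fun j _ => ?_
        simp [hy]

lemma sqId_down (q : ℚ) : ∀ m, SqId q m → SqId q 0 := by
  intro m
  induction m with
  | zero => exact id
  | succ m ih => exact fun h => ih (sqId_step q m h)

lemma sqId_zero (q : ℚ) (H : SqId q 0) : ∃ g h : ℚ, q * g^2 = 1 + h^2 := by
  obtain ⟨F, g, h, hid⟩ := H
  have := hid (fun _ => 1)
  simp [Fin.sum_univ_one] at this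
  exact ⟨g 0, h 0, by linarith⟩





open Classical in
/-- indicator of the closed in-neighbourhood -/
noncomputable def eArc {n : ℕ} (A : Fin n → Fin n → Prop) (x z : Fin n) : ℕ :=
  if x = z ∨ A x z then 1 else 0

lemma eArc_sq {n : ℕ} (A : Fin n → Fin n → Prop) (x z : Fin n) :
    eArc A x z * eArc A x z = eArc A x z := by
  unfold eArc; split <;> simp

lemma sum_eArc {n : ℕ} {A : Fin n → Fin n → Prop} (hIrr : Irreflexive A) (z : Fin n) :
    ∑ x, eArc A x z = inDeg A z + 1 := by
  classical
  unfold eArc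
  rw [← Finset.card_filter]
  have hfil : (univ.filter fun x => x = z ∨ A x z)
      = insert z (univ.filter fun x => A x z) := by
    ext x; simp [or_comm]
  rw [hfil, Finset.card_insert_of_notMem (by simp [hIrr z])]
  have : inDeg A z = (univ.filter fun x => A x z).card := by
    rw [inDeg, Nat.card_eq_fintype_card, Fintype.card_subtype]
  omega

lemma design {n q : ℕ} (A : Fin n → Fin n → Prop) (hq : 1 ≤ q)
    (hn : n = q*q + q + 1) (hIrr : Irreflexive A) (hMed : Mediated A)
    (hdeg : ∀ z, inDeg A z ≤ q) :
    ∀ u v : Fin n, ∑ z, eArc A u z * eArc A v z = if u = v then q + 1 else 1 := by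
  classical
  set e := eArc A with he
  have hk_le : ∀ z : Fin n, (∑ x, e x z) ≤ q + 1 := fun z => by
    rw [he, sum_eArc hIrr]; exact Nat.succ_le_succ (hdeg z)
  have hmed1 : ∀ u v : Fin n, u ≠ v → 1 ≤ ∑ z, e u z * e v z := by
    intro u v huv
    obtain ⟨z0, hz1, hz2⟩ := hMed u v huv
    have h1 : e u z0 * e v z0 = 1 := by
      rw [he]; unfold eArc; rw [if_pos hz1, if_pos hz2]
    calc 1 = e u z0 * e v z0 := h1.symm
      _ ≤ ∑ z, e u z * e v z := Finset.single_le_sum (f := fun z => e u z * e v z)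
          (fun _ _ => Nat.zero_le _) (mem_univ z0)
  set S1 := ∑ z : Fin n, ∑ x, e x z with hS1
  have hSq : ∑ z : Fin n, (∑ x, e x z) * (∑ x, e x z)
      = ∑ u : Fin n, ∑ v : Fin n, ∑ z, e u z * e v z := by
    rw [Finset.sum_congr rfl fun z _ => Finset.sum_mul_sum univ univ (e · z) (e · z)]
    rw [Finset.sum_comm]
    exact Finset.sum_congr rfl fun u _ => Finset.sum_comm
  have hdiag : ∀ u : Fin n, ∑ z, e u z * e u z = ∑ z, e u z :=
    fun u => Finset.sum_congr rfl fun z _ => eArc_sq A u z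
  have hsplit : ∀ u : Fin n, ∑ v : Fin n, ∑ z, e u z * e v z
      = (∑ z, e u z * e u z) + ∑ v ∈ univ.erase u, ∑ z, e u z * e v z :=
    fun u => (Finset.add_sum_erase univ _ (mem_univ u)).symm
  set M := ∑ u : Fin n, ∑ v ∈ univ.erase u, ∑ z, e u z * e v z with hM
  have hr : ∑ u : Fin n, ∑ z, e u z * e u z = S1 := by
    rw [Finset.sum_congr rfl fun u _ => hdiag u, hS1, Finset.sum_comm]
  have hT : ∑ z : Fin n, (∑ x, e x z) * (∑ x, e x z) = S1 + M := by
    rw [hSq, Finset.sum_congr rfl fun u _ => hsplit u, Finset.sum_add_distrib, hr]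
  have hM_ge : n * (n - 1) ≤ M := by
    have : ∀ u : Fin n, (n - 1 : ℕ) ≤ ∑ v ∈ univ.erase u, ∑ z, e u z * e v z := by
      intro u
      calc (n - 1 : ℕ) = ∑ _v ∈ univ.erase u, 1 := by
            rw [Finset.sum_const, smul_eq_mul, mul_one, Finset.card_erase_of_mem (mem_univ u),
              Finset.card_univ, Fintype.card_fin]
        _ ≤ _ := Finset.sum_le_sum fun v hv =>
            hmed1 u v (Ne.symm (Finset.ne_of_mem_erase hv))
    calc n * (n-1) = ∑ _u : Fin n, (n - 1 : ℕ) := by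
          rw [Finset.sum_const, smul_eq_mul, Finset.card_univ, Fintype.card_fin]
      _ ≤ M := Finset.sum_le_sum fun u _ => this u
  have hS2_le : ∑ z : Fin n, (∑ x, e x z) * (∑ x, e x z) ≤ (q+1) * S1 := by
    rw [hS1, Finset.mul_sum]
    exact Finset.sum_le_sum fun z _ => Nat.mul_le_mul_right _ (hk_le z)
  have hS1_le : S1 ≤ n * (q+1) := by
    calc S1 ≤ ∑ _z : Fin n, (q+1) := Finset.sum_le_sum fun z _ => hk_le z
      _ = n * (q+1) := by rw [Finset.sum_const, smul_eq_mul, Finset.card_univ, Fintype.card_fin]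
  have hn1 : n - 1 = q * (q+1) := by have : q*(q+1) = q*q + q := by ring
                                     omega
  have hS1_eq : S1 = n * (q + 1) := by
    have h2 : S1 + n * (n-1) ≤ (q+1) * S1 := by omega
    have h3 : (q+1) * S1 = S1 + q * S1 := by ring
    have h4 : n * (n-1) = q * (n * (q+1)) := by rw [hn1]; ring
    have h5 : q * (n * (q+1)) ≤ q * S1 := by omega
    have h6 : n * (q+1) ≤ S1 := Nat.le_of_mul_le_mul_left h5 (by omega)
    omega
  have hM_eq : M = n * (n - 1) := by
    have h3 : (q+1) * S1 = S1 + q * S1 := by ring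
    have h4 : n * (n-1) = q * (n * (q+1)) := by rw [hn1]; ring
    have h5 : q * S1 = q * (n * (q+1)) := by rw [hS1_eq]
    omega
  -- pointwise equalities
  have hk_eq : ∀ z : Fin n, ∑ x, e x z = q + 1 := by
    have hsum : ∑ z : Fin n, (∑ x, e x z) = ∑ _z : Fin n, (q+1) := by
      rw [Finset.sum_const, smul_eq_mul, Finset.card_univ, Fintype.card_fin, ← hS1_eq, hS1]
    have := (Finset.sum_eq_sum_iff_of_le (fun z _ => hk_le z)).1 hsum
    exact fun z => this z (mem_univ z)
  have hM1 : ∀ u v : Fin n, u ≠ v → ∑ z, e u z * e v z = 1 := by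
    have houter : ∑ u : Fin n, (∑ _v ∈ univ.erase u, 1)
        = ∑ u : Fin n, ∑ v ∈ univ.erase u, ∑ z, e u z * e v z := by
      rw [← hM, hM_eq]
      rw [Finset.sum_congr rfl fun u (_ : u ∈ univ) => (by
        rw [Finset.sum_const, smul_eq_mul, mul_one, Finset.card_erase_of_mem (mem_univ u),
          Finset.card_univ, Fintype.card_fin] : (∑ _v ∈ univ.erase u, 1) = n - 1)]
      rw [Finset.sum_const, smul_eq_mul, Finset.card_univ, Fintype.card_fin]
    have hin : ∀ u ∈ (univ : Finset (Fin n)),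
        (∑ _v ∈ univ.erase u, 1) = ∑ v ∈ univ.erase u, ∑ z, e u z * e v z :=
      (Finset.sum_eq_sum_iff_of_le (fun u _ => Finset.sum_le_sum fun v hv =>
        hmed1 u v (Ne.symm (Finset.ne_of_mem_erase hv)))).1 houter
    intro u v huv
    have := (Finset.sum_eq_sum_iff_of_le (fun v hv => hmed1 u v
      (Ne.symm (Finset.ne_of_mem_erase hv)))).1 (hin u (mem_univ u))
    exact (this v (Finset.mem_erase.2 ⟨Ne.symm huv, mem_univ v⟩)).symm
  have hrep : ∀ u : Fin n, ∑ z, e u z = q + 1 := by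
    intro u
    have hswap : ∑ v : Fin n, ∑ z, e u z * e v z = ∑ z : Fin n, e u z * (∑ x, e x z) := by
      rw [Finset.sum_comm]
      exact Finset.sum_congr rfl fun z _ => (Finset.mul_sum _ _ _).symm
    have hL : ∑ v : Fin n, ∑ z, e u z * e v z = (∑ z, e u z) * (q + 1) := by
      rw [hswap, Finset.sum_congr rfl fun z _ => by rw [hk_eq z], ← Finset.sum_mul]
    have hR : ∑ v : Fin n, ∑ z, e u z * e v z = (∑ z, e u z) + (n - 1) := by
      rw [hsplit u, hdiag u]
      congr 1
      calc ∑ v ∈ univ.erase u, ∑ z, e u z * e v z = ∑ _v ∈ univ.erase u, 1 :=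
            Finset.sum_congr rfl fun v hv => hM1 u v (Ne.symm (Finset.ne_of_mem_erase hv))
        _ = n - 1 := by
            rw [Finset.sum_const, smul_eq_mul, mul_one, Finset.card_erase_of_mem (mem_univ u),
              Finset.card_univ, Fintype.card_fin]
    have hrq : (∑ z, e u z) * q = (q + 1) * q := by
      have hexp : (∑ z, e u z) * (q+1) = (∑ z, e u z) + (∑ z, e u z) * q := by ring
      have hqq : (q+1) * q = q * (q+1) := by ring
      omega
    exact Nat.eq_of_mul_eq_mul_right (by omega) hrq
  intro u v
  by_cases huv : u = v
  · subst huv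
    rw [if_pos rfl, hdiag u, hrep u]
  · rw [if_neg huv, hM1 u v huv]

lemma designQ {n q : ℕ} (A : Fin n → Fin n → Prop) (hq : 1 ≤ q)
    (hn : n = q*q + q + 1) (hIrr : Irreflexive A) (hMed : Mediated A)
    (hdeg : ∀ z, inDeg A z ≤ q) :
    ∀ X : Fin n → ℚ,
      ∑ z : Fin n, (∑ u, (eArc A u z : ℚ) * X u)^2
        = q * (∑ u, (X u)^2) + (∑ u, X u)^2 := by
  classical
  intro X
  have hd := design A hq hn hIrr hMed hdeg
  have step1 : ∑ z : Fin n, (∑ u, (eArc A u z : ℚ) * X u)^2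
      = ∑ u : Fin n, ∑ v : Fin n, (X u * X v) * ((∑ z, eArc A u z * eArc A v z : ℕ) : ℚ) := by
    have h1 : ∀ z : Fin n, (∑ u, (eArc A u z : ℚ) * X u)^2
        = ∑ u : Fin n, ∑ v : Fin n, ((eArc A u z : ℚ) * X u) * ((eArc A v z : ℚ) * X v) := by
      intro z
      rw [sq]
      exact Finset.sum_mul_sum univ univ _ _
    rw [Finset.sum_congr rfl fun z _ => h1 z]
    rw [Finset.sum_comm]
    refine Finset.sum_congr rfl fun u _ => ?_
    rw [Finset.sum_comm]
    refine Finset.sum_congr rfl fun v _ => ?_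
    push_cast
    rw [Finset.mul_sum]
    exact Finset.sum_congr rfl fun z _ => by ring
  rw [step1]
  have step2 : ∀ u v : Fin n, (X u * X v) * ((∑ z, eArc A u z * eArc A v z : ℕ) : ℚ)
      = X u * X v + (if u = v then (X u * X v) * q else 0) := by
    intro u v
    rw [hd u v]
    by_cases h : u = v
    · rw [if_pos h, if_pos h]; push_cast; ring
    · rw [if_neg h, if_neg h]; push_cast; ring
  rw [Finset.sum_congr rfl fun u _ => Finset.sum_congr rfl fun v _ => step2 u v]
  have step3 : ∑ u : Fin n, ∑ v : Fin n, (X u * X v + (if u = v then (X u * X v) * q else 0))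
      = (∑ u : Fin n, ∑ v : Fin n, X u * X v) + ∑ u : Fin n, (X u * X u) * q := by
    rw [← Finset.sum_add_distrib]
    refine Finset.sum_congr rfl fun u _ => ?_
    rw [Finset.sum_add_distrib]
    congr 1
    rw [Finset.sum_ite_eq univ u (fun v => X u * X v * q)]
    simp
  rw [step3]
  have step4 : ∑ u : Fin n, ∑ v : Fin n, X u * X v = (∑ u, X u)^2 := by
    rw [sq, Finset.sum_mul_sum]
  have step5 : ∑ u : Fin n, (X u * X u) * q = q * ∑ u, (X u)^2 := by
    rw [Finset.mul_sum]
    exact Finset.sum_congr rfl fun u _ => by ring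
  rw [step4, step5]
  ring


def Hm (a b c d : ℚ) : Fin 4 → Fin 4 → ℚ :=
  ![![a,b,c,d], ![-b,a,-d,c], ![-c,d,a,-b], ![-d,-c,b,a]]

lemma euler4 (a b c d : ℚ) (y : Fin 4 → ℚ) :
    ∑ i, (∑ j, Hm a b c d i j * y j)^2 = (a^2+b^2+c^2+d^2) * ∑ j, (y j)^2 := by
  simp [Hm, Fin.sum_univ_succ]
  ring

lemma euler4' (q : ℕ) (a b c d : ℕ) (hq : a^2+b^2+c^2+d^2 = q) (hq0 : 0 < q)
    (y : Fin 4 → ℚ) :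
    (q:ℚ) * ∑ i, (∑ j, (Hm a b c d i j / q) * y j)^2 = ∑ j, (y j)^2 := by
  have hqQ : ((a:ℚ)^2+(b:ℚ)^2+(c:ℚ)^2+(d:ℚ)^2) = (q:ℚ) := by exact_mod_cast hq
  have hne : (q:ℚ) ≠ 0 := Nat.cast_ne_zero.2 (by omega)  -- check
  have h1 : ∀ i, (∑ j, (Hm (a:ℚ) b c d i j / q) * y j) = (∑ j, Hm (a:ℚ) b c d i j * y j) / q := by
    intro i
    rw [Finset.sum_div]
    exact Finset.sum_congr rfl fun j _ => by ring
  calc (q:ℚ) * ∑ i, (∑ j, (Hm (a:ℚ) b c d i j / q) * y j)^2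
      = (q:ℚ) * ∑ i, ((∑ j, Hm (a:ℚ) b c d i j * y j)^2 / (q:ℚ)^2) := by
        rw [Finset.sum_congr rfl fun i _ => by rw [h1 i, div_pow]]
    _ = (q:ℚ) * ((∑ i, (∑ j, Hm (a:ℚ) b c d i j * y j)^2) / (q:ℚ)^2) := by
        rw [← Finset.sum_div]
    _ = (q:ℚ) * ((((a:ℚ)^2+(b:ℚ)^2+(c:ℚ)^2+(d:ℚ)^2) * ∑ j, (y j)^2) / (q:ℚ)^2) := by
        rw [euler4]
    _ = ∑ j, (y j)^2 := by rw [hqQ]; field_simp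

lemma blockC (q : ℕ) (hq0 : 0 < q) (a b c d : ℕ) (hq : a^2+b^2+c^2+d^2 = q) (s : ℕ)
    (Y : Fin s × Fin 4 → ℚ) :
    (q:ℚ) * ∑ p : Fin s × Fin 4, (∑ r : Fin s × Fin 4,
        (if p.1 = r.1 then Hm a b c d p.2 r.2 / q else 0) * Y r)^2
      = ∑ p : Fin s × Fin 4, (Y p)^2 := by
  have hinner : ∀ p : Fin s × Fin 4,
      (∑ r : Fin s × Fin 4, (if p.1 = r.1 then Hm a b c d p.2 r.2 / q else 0) * Y r)
      = ∑ r2 : Fin 4, (Hm a b c d p.2 r2 / q) * Y (p.1, r2) := by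
    intro p
    rw [Fintype.sum_prod_type]
    rw [Finset.sum_comm]
    refine Finset.sum_congr rfl fun r2 _ => ?_
    simp [ite_mul]
  rw [Finset.sum_congr rfl fun p _ => by rw [hinner p]]
  rw [Fintype.sum_prod_type, Finset.mul_sum]
  rw [Fintype.sum_prod_type (f := fun p => (Y p)^2)]
  refine Finset.sum_congr rfl fun p1 _ => ?_
  exact euler4' q a b c d hq hq0 (fun r2 => Y (p1, r2))

lemma blockC' (q : ℕ) (hq0 : 0 < q) (s m : ℕ) (hm : s * 4 = m) :
    ∃ G : Fin m → Fin m → ℚ, ∀ y : Fin m → ℚ,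
      (q:ℚ) * ∑ j, (∑ l, G j l * y l)^2 = ∑ j, (y j)^2 := by
  obtain ⟨a, b, c, d, hq⟩ := Nat.sum_four_squares q
  subst hm
  set e : Fin s × Fin 4 ≃ Fin (s * 4) := finProdFinEquiv with he
  refine ⟨fun j l => if (e.symm j).1 = (e.symm l).1
      then Hm a b c d (e.symm j).2 (e.symm l).2 / q else 0, ?_⟩
  intro y
  have h1 : ∀ F : Fin (s*4) → ℚ, ∑ j, F j = ∑ p : Fin s × Fin 4, F (e p) :=
    fun F => (Equiv.sum_comp e F).symm
  rw [h1, h1 (fun j => (y j)^2)]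
  have h2 : ∀ p : Fin s × Fin 4,
      (∑ l, (if (e.symm (e p)).1 = (e.symm l).1
        then Hm a b c d (e.symm (e p)).2 (e.symm l).2 / q else 0) * y l)
      = ∑ r : Fin s × Fin 4, (if p.1 = r.1 then Hm a b c d p.2 r.2 / q else 0) * (y (e r)) := by
    intro p
    rw [h1]
    simp only [Equiv.symm_apply_apply]
  rw [Finset.sum_congr rfl fun p _ => by rw [h2 p]]
  exact blockC q hq0 a b c d hq s (fun r => y (e r))

lemma sqid_start {n q : ℕ} (A : Fin n → Fin n → Prop) (hq : 1 ≤ q)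
    (hn : n = q*q + q + 1) (hIrr : Irreflexive A) (hMed : Mediated A)
    (hdeg : ∀ z, inDeg A z ≤ q) (s : ℕ) (hs : s * 4 = n + 1) : SqId (q:ℚ) n := by
  obtain ⟨G, hG⟩ := blockC' q (by omega) s (n+1) hs
  refine ⟨fun z l => ∑ u : Fin n, (eArc A u z : ℚ) * G u.castSucc l,
          fun l => G (Fin.last n) l,
          fun l => ∑ u : Fin n, G u.castSucc l, ?_⟩
  intro y
  set x : Fin (n+1) → ℚ := fun j => ∑ l, G j l * y l with hx
  have hswap : ∀ c : Fin n → ℚ, (∑ l, (∑ u : Fin n, c u * G u.castSucc l) * y l)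
      = ∑ u : Fin n, c u * x u.castSucc := by
    intro c
    calc ∑ l, (∑ u : Fin n, c u * G u.castSucc l) * y l
        = ∑ l, ∑ u : Fin n, c u * (G u.castSucc l * y l) := by
          refine Finset.sum_congr rfl fun l _ => ?_
          rw [Finset.sum_mul]
          exact Finset.sum_congr rfl fun u _ => by ring
      _ = ∑ u : Fin n, ∑ l, c u * (G u.castSucc l * y l) := Finset.sum_comm
      _ = ∑ u : Fin n, c u * x u.castSucc := by
          refine Finset.sum_congr rfl fun u _ => ?_
          rw [hx, ← Finset.mul_sum]
  have hgsum : (∑ l, G (Fin.last n) l * y l) = x (Fin.last n) := by rw [hx]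
  have hhsum : (∑ l, (∑ u : Fin n, G u.castSucc l) * y l) = ∑ u : Fin n, x u.castSucc := by
    have := hswap (fun _ => 1)
    simpa using this
  rw [Finset.sum_congr rfl fun z (_ : z ∈ univ) => by rw [hswap (fun u => (eArc A u z : ℚ))]]
  rw [hgsum, hhsum]
  rw [designQ A hq hn hIrr hMed hdeg (fun u => x u.castSucc)]
  have hcast : (q:ℚ) * (∑ u : Fin n, (x u.castSucc)^2) + (q:ℚ) * (x (Fin.last n))^2
      = (q:ℚ) * ∑ j : Fin (n+1), (x j)^2 := by
    rw [Fin.sum_univ_castSucc (f := fun j => (x j)^2)]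
    ring
  have hGx : (q:ℚ) * ∑ j : Fin (n+1), (x j)^2 = ∑ j, (y j)^2 := hG y
  calc (q:ℚ) * (∑ u : Fin n, (x u.castSucc)^2) + (∑ u : Fin n, x u.castSucc)^2
        + (q:ℚ) * (x (Fin.last n))^2
      = (q:ℚ) * ∑ j : Fin (n+1), (x j)^2 + (∑ u : Fin n, x u.castSucc)^2 := by
        rw [← hcast]; ring
    _ = ∑ j : Fin (n+1), (y j)^2 + (∑ u : Fin n, x u.castSucc)^2 := by rw [hGx]

lemma no_good_digraph (k q n : ℕ) (hqdef : q = 36*k+6) (hndef : n = q*q+q+1)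
    (A : Fin n → Fin n → Prop)
    (hIrr : Irreflexive A) (hMed : Mediated A)
    (hdeg : ∀ z, inDeg A z ≤ q) : False := by
  have hs : (324*k*k + 117*k + 11) * 4 = n + 1 := by
    rw [hndef, hqdef]; ring
  have hstart : SqId (q:ℚ) n :=
    sqid_start A (by omega) hndef hIrr hMed hdeg _ hs
  obtain ⟨g, h, hgh⟩ := sqId_zero _ (sqId_down _ _ hstart)
  -- convert to integers
  have hgden : ((g.den : ℚ)) ≠ 0 := Nat.cast_ne_zero.2 g.den_nz
  have hhden : ((h.den : ℚ)) ≠ 0 := Nat.cast_ne_zero.2 h.den_nz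
  have hgnum : g * (g.den : ℚ) = (g.num : ℚ) := by
    calc g * (g.den:ℚ) = ((g.num:ℚ)/(g.den:ℚ)) * (g.den:ℚ) := by rw [Rat.num_div_den]
      _ = (g.num:ℚ) := div_mul_cancel₀ _ hgden
  have hhnum : h * (h.den : ℚ) = (h.num : ℚ) := by
    calc h * (h.den:ℚ) = ((h.num:ℚ)/(h.den:ℚ)) * (h.den:ℚ) := by rw [Rat.num_div_den]
      _ = (h.num:ℚ) := div_mul_cancel₀ _ hhden
  set D : ℚ := (g.den : ℚ) * (h.den : ℚ) with hD
  have hkey : (q:ℚ) * ((g.num : ℚ) * (h.den:ℚ))^2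
      = ((g.den:ℚ) * (h.den:ℚ))^2 + ((h.num:ℚ) * (g.den:ℚ))^2 := by
    have h1 : (q:ℚ) * (g*D)^2 = D^2 + (h*D)^2 := by
      calc (q:ℚ) * (g*D)^2 = ((q:ℚ) * g^2) * D^2 := by ring
        _ = (1 + h^2) * D^2 := by rw [hgh]
        _ = D^2 + (h*D)^2 := by ring
    have h2 : g * D = (g.num : ℚ) * (h.den:ℚ) := by
      rw [hD, ← mul_assoc, hgnum]
    have h3 : h * D = (h.num : ℚ) * (g.den:ℚ) := by
      rw [hD, mul_comm ((g.den:ℚ)) ((h.den:ℚ)), ← mul_assoc, hhnum]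
    rw [h2, h3] at h1
    exact h1
  have hZ : (q:ℤ) * (g.num * (h.den:ℤ))^2
      = ((g.den:ℤ) * (h.den:ℤ))^2 + (h.num * (g.den:ℤ))^2 := by
    exact_mod_cast hkey
  have hq3 : (q:ℤ) = 3 * (12*(k:ℤ) + 2) := by subst hqdef; push_cast; ring
  rw [hq3] at hZ
  have hu : ¬ (3:ℤ) ∣ (12*(k:ℤ)+2) := by rintro ⟨w, hw⟩; omega
  have hgnum0 : g.num ≠ 0 := by
    intro h0
    have : g = 0 := Rat.num_eq_zero.1 h0
    rw [this] at hgh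
    nlinarith [sq_nonneg h]
  have ha0 : g.num * (h.den:ℤ) ≠ 0 :=
    mul_ne_zero hgnum0 (Int.natCast_ne_zero.2 h.den_nz)
  exact no_int_sol _ hu (g.num * (h.den:ℤ)).natAbs (g.num * (h.den:ℤ))
    ((g.den:ℤ) * (h.den:ℤ)) (h.num * (g.den:ℤ)) le_rfl ha0 hZ

lemma f_eval (q : ℕ) (hq : 1 ≤ q) : f (q*q+q+1) = q := by
  unfold f
  have h1 : 4 * ((q*q+q+1 : ℕ) : ℝ) - 3 = ((2*q+1 : ℕ) : ℝ)^2 := by push_cast; ring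
  rw [h1, Real.sqrt_sq (by positivity)]
  have h2 : (((2*q+1 : ℕ) : ℝ) - 1)/2 = (q : ℝ) := by push_cast; ring
  rw [h2, Nat.ceil_natCast]

lemma mu_gt (k : ℕ) :
    f ((36*k+6)*(36*k+6)+(36*k+6)+1) < mu ((36*k+6)*(36*k+6)+(36*k+6)+1) := by
  set q : ℕ := 36*k+6 with hqdef
  set n : ℕ := q*q+q+1 with hndef
  rw [f_eval q (by omega)]
  set S := { d : ℕ | ∃ A : Fin n → Fin n → Prop, Irreflexive A ∧ Mediated A ∧ maxInDeg A = d }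
    with hS
  have hne : S.Nonempty := by
    refine ⟨maxInDeg (fun x z : Fin n => x ≠ z), fun x z : Fin n => x ≠ z, ?_, ?_, rfl⟩
    · intro x hx; exact hx rfl
    · intro x y hxy; exact ⟨y, Or.inr hxy, Or.inl rfl⟩
  have hmem : mu n ∈ S := Nat.sInf_mem hne
  obtain ⟨A, hIrr, hMed, hmax⟩ := hmem
  by_contra hle
  push_neg at hle
  have hdeg : ∀ z, inDeg A z ≤ q := by
    intro z
    calc inDeg A z ≤ maxInDeg A := Finset.le_sup (mem_univ z)
      _ ≤ q := by rw [hmax]; exact hle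
  exact no_good_digraph k q n rfl rfl A hIrr hMed hdeg

/-- There are infinitely many positive integers `n` with `μ(n) > f(n)`. -/
theorem infinitely_many_mu_gt_f : {n : ℕ | f n < mu n}.Infinite := by
  apply Set.infinite_of_injective_forall_mem
    (f := fun k : ℕ => (36*k+6)*(36*k+6)+(36*k+6)+1)
  case hi =>
    have hmono : StrictMono (fun k : ℕ => (36*k+6)*(36*k+6)+(36*k+6)+1) := by
      intro a b hab
      show (36*a+6)*(36*a+6)+(36*a+6)+1 < (36*b+6)*(36*b+6)+(36*b+6)+1
      have h1 : 36*a+6 < 36*b+6 := by omega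
      have h2 : (36*a+6)*(36*a+6) < (36*b+6)*(36*b+6) :=
        Nat.mul_lt_mul_of_lt_of_le h1 (le_of_lt h1) (by omega)
      omega
    exact hmono.injective
  case hf =>
    intro k
    exact mu_gt k
end
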